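/- arXiv:math/9712263 — 15 statements merged into one kernel-verified Lean document; each statement's English description precedes it below -/
import Mathlib

section
/- Let θ be a real number. Let R_φ denote the rotation matrix [[cos φ, −sin φ],[sin φ, cos φ]] and let P denote the reflection matrix [[1,0],[0,−1]]. Then the subgroup of the group of invertible 2×2 real matrices generated by the four elements R_θ·P, R_θ, R_{π+θ}, and R_{(π/2)+θ}·P is finite if and only if θ/π is rational. -/
open Real Matrix

/-- The rotation matrix by angle `φ`. -/
noncomputable def rotMat (φ : ℝ) : Matrix (Fin 2) (Fin 2) ℝ :=
  !![Real.cos φ, -Real.sin φ; Real.sin φ, Real.cos φ]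

/-- The reflection matrix `[[1,0],[0,-1]]`. -/
def reflMat : Matrix (Fin 2) (Fin 2) ℝ := !![1, 0; 0, -1]

lemma rotMat_mul (a b : ℝ) : rotMat a * rotMat b = rotMat (a + b) := by
  ext i j
  fin_cases i <;> fin_cases j <;>
    simp [rotMat, Matrix.mul_apply, Fin.sum_univ_two, Real.cos_add, Real.sin_add] <;> ring

lemma rotMat_zero : rotMat 0 = 1 := by
  simp [rotMat, Matrix.one_fin_two]

lemma refl_mul_refl : reflMat * reflMat = 1 := by
  ext i j
  fin_cases i <;> fin_cases j <;>
    simp [reflMat, Matrix.mul_apply, Fin.sum_univ_two, Matrix.one_apply]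

lemma refl_mul_rot (a : ℝ) : reflMat * rotMat a = rotMat (-a) * reflMat := by
  ext i j
  fin_cases i <;> fin_cases j <;>
    simp [reflMat, rotMat, Matrix.mul_apply, Fin.sum_univ_two]

lemma rotMat_period (a : ℝ) (n : ℤ) : rotMat (a + n * (2 * π)) = rotMat a := by
  simp [rotMat, Real.cos_add_int_mul_two_pi, Real.sin_add_int_mul_two_pi]

/-- The rotation as an element of `GL(2,ℝ)`. -/
noncomputable def rotGL (a : ℝ) : Matrix.GeneralLinearGroup (Fin 2) ℝ :=
  ⟨rotMat a, rotMat (-a),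
    by rw [rotMat_mul]; simp [rotMat_zero],
    by rw [rotMat_mul]; simp [rotMat_zero]⟩

/-- The reflection as an element of `GL(2,ℝ)`. -/
def reflGL : Matrix.GeneralLinearGroup (Fin 2) ℝ :=
  ⟨reflMat, reflMat, refl_mul_refl, refl_mul_refl⟩

lemma rotGL_mul (a b : ℝ) : rotGL a * rotGL b = rotGL (a + b) :=
  Units.ext (rotMat_mul a b)

lemma rotGL_zero : rotGL 0 = 1 := Units.ext rotMat_zero

lemma rotGL_inv (a : ℝ) : (rotGL a)⁻¹ = rotGL (-a) := by
  apply inv_eq_of_mul_eq_one_right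
  rw [rotGL_mul]
  simp [rotGL_zero]

lemma reflGL_mul_rotGL (a : ℝ) : reflGL * rotGL a = rotGL (-a) * reflGL :=
  Units.ext (refl_mul_rot a)

lemma reflGL_sq : reflGL * reflGL = 1 := Units.ext refl_mul_refl

lemma rotGL_period (a : ℝ) (n : ℤ) : rotGL (a + n * (2 * π)) = rotGL a :=
  Units.ext (rotMat_period a n)

lemma rotGL_pow (a : ℝ) (n : ℕ) : rotGL a ^ n = rotGL (n * a) := by
  induction n with
  | zero => simp [rotGL_zero]
  | succ n ih =>
    rw [pow_succ, ih, rotGL_mul]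
    congr 1
    push_cast
    ring

/-- Generic element of the (possibly infinite) dihedral-type group. -/
noncomputable def genElt (δ : ℝ) (x : ℤ × Bool) : Matrix.GeneralLinearGroup (Fin 2) ℝ :=
  rotGL (x.1 * δ) * (if x.2 then reflGL else 1)

lemma genElt_false (δ : ℝ) (k : ℤ) : genElt δ (k, false) = rotGL (k * δ) := by
  simp [genElt]

lemma genElt_true (δ : ℝ) (k : ℤ) : genElt δ (k, true) = rotGL (k * δ) * reflGL := by
  simp [genElt]

lemma genElt_val_false (δ : ℝ) (k : ℤ) :
    (genElt δ (k, false) : Matrix (Fin 2) (Fin 2) ℝ) = rotMat (k * δ) := by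
  rw [genElt_false]; rfl

lemma genElt_val_true (δ : ℝ) (k : ℤ) :
    (genElt δ (k, true) : Matrix (Fin 2) (Fin 2) ℝ) = rotMat (k * δ) * reflMat := by
  rw [genElt_true]; rfl

/-- The subgroup generated by rotations by multiples of `δ` and the reflection. -/
noncomputable def dihedralSub (δ : ℝ) : Subgroup (Matrix.GeneralLinearGroup (Fin 2) ℝ) where
  carrier := Set.range (genElt δ)
  one_mem' := ⟨(0, false), by simp [genElt, rotGL_zero]⟩
  mul_mem' := by
    rintro _ _ ⟨⟨k₁, e₁⟩, rfl⟩ ⟨⟨k₂, e₂⟩, rfl⟩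
    have hadd : ((k₁ + k₂ : ℤ) : ℝ) * δ = (k₁ : ℝ) * δ + (k₂ : ℝ) * δ := by push_cast; ring
    have hsub : ((k₁ - k₂ : ℤ) : ℝ) * δ = (k₁ : ℝ) * δ + -((k₂ : ℝ) * δ) := by push_cast; ring
    cases e₁ <;> cases e₂
    · exact ⟨(k₁ + k₂, false), by rw [genElt_false, genElt_false, genElt_false, hadd,
        ← rotGL_mul]⟩
    · exact ⟨(k₁ + k₂, true), by rw [genElt_true, genElt_false, genElt_true, hadd,
        ← rotGL_mul, mul_assoc]⟩
    · refine ⟨(k₁ - k₂, true), ?_⟩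
      rw [genElt_true, genElt_true, genElt_false, mul_assoc, reflGL_mul_rotGL,
        ← mul_assoc, rotGL_mul, hsub]
    · refine ⟨(k₁ - k₂, false), ?_⟩
      rw [genElt_false, genElt_true, genElt_true, hsub, ← rotGL_mul,
        mul_assoc (rotGL ((k₁ : ℝ) * δ)) reflGL,
        ← mul_assoc reflGL (rotGL ((k₂ : ℝ) * δ)) reflGL, reflGL_mul_rotGL,
        mul_assoc (rotGL (-((k₂ : ℝ) * δ))) reflGL reflGL, reflGL_sq, mul_one]
  inv_mem' := by
    rintro _ ⟨⟨k, e⟩, rfl⟩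
    cases e
    · refine ⟨(-k, false), ?_⟩
      rw [genElt_false, genElt_false, rotGL_inv]
      congr 1
      push_cast; ring
    · refine ⟨(k, true), ?_⟩
      apply eq_inv_of_mul_eq_one_left
      rw [genElt_true, mul_assoc, ← mul_assoc reflGL, reflGL_mul_rotGL,
        mul_assoc (rotGL (-((k : ℝ) * δ))), reflGL_sq, mul_one, rotGL_mul]
      simp [rotGL_zero]

lemma dihedral_finite (q : ℕ) (hq : q ≠ 0) :
    ((dihedralSub (π / (2 * q)) : Set (Matrix.GeneralLinearGroup (Fin 2) ℝ))).Finite := by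
  set δ : ℝ := π / (2 * q) with hδ
  have hN : (0 : ℤ) < 4 * q := by positivity
  apply Set.Finite.subset
    (Set.Finite.image (genElt δ) ((Set.finite_Ico (0 : ℤ) (4 * q)).prod Set.finite_univ))
  rintro _ ⟨⟨k, e⟩, rfl⟩
  refine ⟨(k % (4 * q), e), ⟨Set.mem_Ico.2 ⟨Int.emod_nonneg k hN.ne', Int.emod_lt_of_pos k hN⟩,
    Set.mem_univ _⟩, ?_⟩
  simp only [genElt]
  congr 1
  have hqR : (q : ℝ) ≠ 0 := Nat.cast_ne_zero.2 hq
  have hkR : 4 * (q : ℝ) * ((k / (4 * q) : ℤ) : ℝ) + ((k % (4 * q) : ℤ) : ℝ) = (k : ℝ) := by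
    exact_mod_cast congrArg (fun z : ℤ => (z : ℝ)) (Int.mul_ediv_add_emod k (4 * q))
  have h2 : 2 * π = (4 * (q : ℝ)) * δ := by
    rw [hδ]; field_simp; ring
  have key : (↑(k % (4 * q)) : ℝ) * δ + (k / (4 * q) : ℤ) * (2 * π) = (k : ℝ) * δ := by
    rw [h2]
    linear_combination δ * hkR
  rw [← key, rotGL_period]

theorem stmt_0 (θ : ℝ) :
    (((Subgroup.closure
        {M : Matrix.GeneralLinearGroup (Fin 2) ℝ |
          (M : Matrix (Fin 2) (Fin 2) ℝ) = rotMat θ * reflMat ∨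
          (M : Matrix (Fin 2) (Fin 2) ℝ) = rotMat θ ∨
          (M : Matrix (Fin 2) (Fin 2) ℝ) = rotMat (Real.pi + θ) ∨
          (M : Matrix (Fin 2) (Fin 2) ℝ) = rotMat (Real.pi / 2 + θ) * reflMat}) :
      Set (Matrix.GeneralLinearGroup (Fin 2) ℝ)).Finite) ↔
    ∃ a : ℚ, θ / Real.pi = (a : ℝ) := by
  set S : Set (Matrix.GeneralLinearGroup (Fin 2) ℝ) :=
    {M : Matrix.GeneralLinearGroup (Fin 2) ℝ |
      (M : Matrix (Fin 2) (Fin 2) ℝ) = rotMat θ * reflMat ∨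
      (M : Matrix (Fin 2) (Fin 2) ℝ) = rotMat θ ∨
      (M : Matrix (Fin 2) (Fin 2) ℝ) = rotMat (Real.pi + θ) ∨
      (M : Matrix (Fin 2) (Fin 2) ℝ) = rotMat (Real.pi / 2 + θ) * reflMat} with hS
  have hπ : (π : ℝ) ≠ 0 := Real.pi_ne_zero
  constructor
  · intro hfin
    have hmem : rotGL θ ∈ Subgroup.closure S :=
      Subgroup.subset_closure (Or.inr (Or.inl rfl))
    have : Finite (Subgroup.closure S) := hfin.to_subtype
    set g : Subgroup.closure S := ⟨rotGL θ, hmem⟩ with hg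
    have hn : 0 < orderOf g := orderOf_pos g
    have hpow : g ^ orderOf g = 1 := pow_orderOf_eq_one g
    have hpowGL : rotGL θ ^ orderOf g = 1 := by
      have := congrArg (fun x : Subgroup.closure S => (x : Matrix.GeneralLinearGroup (Fin 2) ℝ))
        hpow
      simp only [Subgroup.coe_pow, OneMemClass.coe_one] at this
      exact this
    rw [rotGL_pow] at hpowGL
    have hmat : rotMat ((orderOf g : ℝ) * θ) = 1 := by
      have := congrArg Units.val hpowGL
      simpa [rotGL] using this
    have hcos : Real.cos ((orderOf g : ℝ) * θ) = 1 := by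
      have := congrFun (congrFun hmat 0) 0
      simpa [rotMat, Matrix.one_apply] using this
    obtain ⟨m, hm⟩ := (Real.cos_eq_one_iff _).1 hcos
    have hnR : ((orderOf g : ℕ) : ℝ) ≠ 0 := Nat.cast_ne_zero.2 hn.ne'
    refine ⟨(2 * m : ℚ) / (orderOf g : ℚ), ?_⟩
    push_cast
    rw [div_eq_div_iff hπ hnR]
    linarith [hm]
  · rintro ⟨a, ha⟩
    have hθ : θ = (a : ℝ) * π := (div_eq_iff hπ).mp ha
    set q : ℕ := a.den with hq
    have hq0 : q ≠ 0 := a.den_nz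
    have hqR : (q : ℝ) ≠ 0 := Nat.cast_ne_zero.2 hq0
    set δ : ℝ := π / (2 * q) with hδ
    have haR : (a : ℝ) = (a.num : ℝ) / (q : ℝ) := by rw [Rat.cast_def]
    have hθδ : ((2 * a.num : ℤ) : ℝ) * δ = θ := by
      rw [hθ, haR, hδ]; push_cast; field_simp
    have hπθδ : (((2 * q : ℤ) + 2 * a.num : ℤ) : ℝ) * δ = π + θ := by
      rw [hθ, haR, hδ]; push_cast; field_simp
    have hπ2θδ : (((q : ℤ) + 2 * a.num : ℤ) : ℝ) * δ = π / 2 + θ := by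
      rw [hθ, haR, hδ]; push_cast; field_simp
    have hsub : Subgroup.closure S ≤ dihedralSub δ := by
      rw [Subgroup.closure_le]
      rintro M (hM | hM | hM | hM)
      · exact ⟨(2 * a.num, true), Units.ext (by rw [genElt_val_true, hM, hθδ])⟩
      · exact ⟨(2 * a.num, false), Units.ext (by rw [genElt_val_false, hM, hθδ])⟩
      · exact ⟨((2 * q : ℤ) + 2 * a.num, false), Units.ext (by
          rw [genElt_val_false, hM, hπθδ])⟩
      · exact ⟨((q : ℤ) + 2 * a.num, true), Units.ext (by
          rw [genElt_val_true, hM, hπ2θδ])⟩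
    exact (dihedral_finite q hq0).subset hsub
end

section
/- The function θ ↦ log(sin θ) / log(cos(θ)/2) is strictly decreasing on the open interval (0, π/2); that is, if 0 < θ₁ < θ₂ < π/2 then log(sin θ₁)/log(cos(θ₁)/2) > log(sin θ₂)/log(cos(θ₂)/2). -/
open Real

theorem stmt_2 (θ₁ θ₂ : ℝ) (h1 : 0 < θ₁) (h12 : θ₁ < θ₂) (h2 : θ₂ < Real.pi / 2) :
    Real.log (Real.sin θ₂) / Real.log (Real.cos θ₂ / 2) <
      Real.log (Real.sin θ₁) / Real.log (Real.cos θ₁ / 2) := by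
  have hpi : (0:ℝ) < Real.pi / 2 := by positivity
  have h1' : θ₁ < Real.pi / 2 := h12.trans h2
  -- sin facts
  have hs1pos : 0 < Real.sin θ₁ := Real.sin_pos_of_pos_of_lt_pi h1 (h1'.trans (by linarith [Real.pi_pos]))
  have hs12 : Real.sin θ₁ < Real.sin θ₂ := by
    apply Real.strictMonoOn_sin ⟨by linarith, le_of_lt h1'⟩ ⟨by linarith, le_of_lt h2⟩ h12
  have hs2lt : Real.sin θ₂ < 1 := by
    have := Real.strictMonoOn_sin (a := θ₂) (b := Real.pi / 2)
      ⟨by linarith, le_of_lt h2⟩ ⟨by linarith, le_rfl⟩ h2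
    simpa using this
  -- cos facts
  have hc2pos : 0 < Real.cos θ₂ := Real.cos_pos_of_mem_Ioo ⟨by linarith, h2⟩
  have hc21 : Real.cos θ₂ < Real.cos θ₁ := by
    apply Real.cos_lt_cos_of_nonneg_of_le_pi (le_of_lt h1) (by linarith [Real.pi_pos]) h12
  have hc1lt : Real.cos θ₁ ≤ 1 := Real.cos_le_one θ₁
  -- logs negative
  have hl1 : Real.log (Real.sin θ₁) < 0 := Real.log_neg hs1pos (hs12.trans hs2lt)
  have hl2 : Real.log (Real.sin θ₂) < 0 := Real.log_neg (hs1pos.trans hs12) hs2lt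
  have hl12 : Real.log (Real.sin θ₁) < Real.log (Real.sin θ₂) :=
    Real.log_lt_log hs1pos hs12
  have hm1 : Real.log (Real.cos θ₁ / 2) < 0 := Real.log_neg (by linarith) (by linarith)
  have hm21 : Real.log (Real.cos θ₂ / 2) < Real.log (Real.cos θ₁ / 2) :=
    Real.log_lt_log (by linarith) (by linarith)
  -- rewrite as quotient of positives
  have key : (-Real.log (Real.sin θ₂)) / (-Real.log (Real.cos θ₂ / 2)) <
      (-Real.log (Real.sin θ₁)) / (-Real.log (Real.cos θ₁ / 2)) := by
    have hb1 : 0 < -Real.log (Real.cos θ₁ / 2) := by linarith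
    have hb2 : 0 < -Real.log (Real.cos θ₂ / 2) := by linarith
    have ha1 : 0 < -Real.log (Real.sin θ₁) := by linarith
    calc (-Real.log (Real.sin θ₂)) / (-Real.log (Real.cos θ₂ / 2))
        < (-Real.log (Real.sin θ₁)) / (-Real.log (Real.cos θ₂ / 2)) :=
          (div_lt_div_iff_of_pos_right hb2).mpr (by linarith)
      _ < (-Real.log (Real.sin θ₁)) / (-Real.log (Real.cos θ₁ / 2)) :=
          div_lt_div_of_pos_left ha1 hb1 (by linarith)
  rw [neg_div_neg_eq, neg_div_neg_eq] at key
  exact key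
end

section
/- Let θ ∈ (0, π/2) be such that θ/π is rational and log(sin θ)/log(cos(θ)/2) is rational. Then θ = π/4. -/
open Real Polynomial

private lemma aux_inj {p q : ℕ} (hp : 1 ≤ p) (hq : 1 ≤ q)
    {x y : ℝ} (hx0 : 0 ≤ x) (hx1 : x ≤ 1) (hy0 : 0 ≤ y) (hy1 : y ≤ 1)
    (hxr : x ^ q * 4 ^ p = (1 - x) ^ p) (hyr : y ^ q * 4 ^ p = (1 - y) ^ p) :
    x = y := by
  have key : ∀ a b : ℝ, 0 ≤ a → a ≤ 1 → 0 ≤ b → b ≤ 1 → a < b →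
      a ^ q * 4 ^ p = (1 - a) ^ p → b ^ q * 4 ^ p = (1 - b) ^ p → False := by
    intro a b ha0 ha1 hb0 hb1 hab har hbr
    have h1 : a ^ q * 4 ^ p < b ^ q * 4 ^ p := by
      have h2 : a ^ q < b ^ q := pow_lt_pow_left₀ hab ha0 (by omega)
      have h3 : (0:ℝ) < 4 ^ p := by positivity
      nlinarith
    have h2 : (1 - b) ^ p < (1 - a) ^ p :=
      pow_lt_pow_left₀ (by linarith) (by linarith) (by omega)
    linarith [har, hbr]
  rcases lt_trichotomy x y with h | h | h
  · exact absurd (key x y hx0 hx1 hy0 hy1 h hxr hyr) (by simp)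
  · exact h
  · exact absurd (key y x hy0 hy1 hx0 hx1 h hyr hxr) (by simp)

private lemma u_rational {n p q : ℕ} (hn : 1 ≤ n) (hp : 1 ≤ p) (hq : 1 ≤ q)
    {ζ : ℂ} (hζ : ζ ^ n = 1) {u : ℝ}
    (hu : ((u : ℂ)) = (2 - ζ - ζ⁻¹) / 4)
    (hrel : u ^ q * 4 ^ p = (1 - u) ^ p) :
    ∃ r : ℚ, u = (r : ℝ) := by
  classical
  set g : Polynomial ℚ := Polynomial.C ((4:ℚ)^p) * Polynomial.X ^ q - (1 - Polynomial.X) ^ p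
    with hgdef
  have hζint : IsIntegral ℚ ζ :=
    ⟨Polynomial.X ^ n - Polynomial.C 1, Polynomial.monic_X_pow_sub_C 1 (by omega), by simp [hζ]⟩
  set K : IntermediateField ℚ ℂ := IntermediateField.adjoin ℚ {ζ} with hKdef
  haveI : FiniteDimensional ℚ K := IntermediateField.adjoin.finiteDimensional hζint
  haveI : NumberField K := ⟨⟩
  have hζK : ζ ∈ K := IntermediateField.mem_adjoin_simple_self ℚ ζ
  have hratK : ∀ m : ℚ, ((m : ℂ)) ∈ K := fun m =>
    (eq_ratCast (algebraMap ℚ ℂ) m) ▸ K.algebraMap_mem m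
  have huK : ((u:ℂ)) ∈ K := by
    rw [hu]
    refine div_mem (sub_mem (sub_mem ?_ hζK) (inv_mem hζK)) ?_
    · simpa using hratK 2
    · simpa using hratK 4
  set x : K := ⟨(u:ℂ), huK⟩ with hxdef
  have hxint : IsIntegral ℚ x := IsIntegral.of_finite ℚ x
  have hxmap : algebraMap K ℂ x = ((u:ℂ)) := rfl
  have huint : IsIntegral ℚ ((u:ℂ)) := by
    rw [← hxmap]
    exact (isIntegral_algebraMap_iff (algebraMap K ℂ).injective).mpr hxint
  have hμx : minpoly ℚ ((u:ℂ)) = minpoly ℚ x := by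
    rw [← hxmap]
    exact minpoly.algebraMap_eq (algebraMap K ℂ).injective x
  -- the element relation in K
  set ζK : K := ⟨ζ, hζK⟩ with hζKdef
  have hζKn : ζK ^ n = 1 := by
    apply Subtype.ext
    push_cast
    exact hζ
  have hK4 : (((4:K)):ℂ) = 4 := map_ofNat (algebraMap K ℂ) 4
  have hK2 : (((2:K)):ℂ) = 2 := map_ofNat (algebraMap K ℂ) 2
  have hζne : ζ ≠ 0 := by
    intro h
    rw [h, zero_pow (by omega : n ≠ 0)] at hζ
    exact zero_ne_one hζ
  have hxrel : 4 * x + ζK + ζK⁻¹ = 2 := by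
    apply Subtype.ext
    rw [show ((4 * x + ζK + ζK⁻¹ : K) : ℂ) =
      ((4:K):ℂ) * ((x:K):ℂ) + (ζK:ℂ) + ((ζK:ℂ))⁻¹ by push_cast [IntermediateField.coe_inv]; ring]
    rw [hK4]
    show 4 * (u:ℂ) + ζ + ζ⁻¹ = ((2:K):ℂ)
    rw [hK2, hu]
    field_simp
    ring
  -- every root of the minpoly has the required shape
  have hroot : ∀ z ∈ (minpoly ℚ x).rootSet ℂ, ∃ x' : ℝ, z = (x' : ℂ) ∧ 0 ≤ x' ∧ x' ≤ 1 := by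
    intro z hz
    obtain ⟨φ, hφ⟩ := (NumberField.Embeddings.range_eval_eq_rootSet_minpoly K ℂ x).symm.subset hz
    set w : ℂ := φ ζK with hwdef
    have hwn : w ^ n = 1 := by rw [hwdef, ← map_pow, hζKn, map_one]
    have hz4 : 4 * z + w + w⁻¹ = 2 := by
      rw [← hφ, hwdef, ← map_inv₀, ← map_ofNat φ 4, ← map_mul, ← map_add, ← map_add, hxrel,
        map_ofNat]
    have hwabs : ‖w‖ = 1 := by
      have h1 : ‖w‖ ^ n = 1 := by rw [← norm_pow, hwn, norm_one]
      rcases lt_trichotomy (‖w‖) 1 with h | h | h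
      · have := pow_lt_one₀ (norm_nonneg w) h (by omega : n ≠ 0)
        rw [h1] at this; exact absurd this (lt_irrefl 1)
      · exact h
      · have := one_lt_pow₀ h (by omega : n ≠ 0)
        rw [h1] at this; exact absurd this (lt_irrefl 1)
    have hwinv : w⁻¹ = (starRingEnd ℂ) w := Complex.inv_eq_conj hwabs
    rw [hwinv] at hz4
    have hre : w + (starRingEnd ℂ) w = ((2 * w.re : ℝ) : ℂ) := Complex.add_conj w
    refine ⟨(2 - 2 * w.re) / 4, ?_, ?_, ?_⟩
    · push_cast
      push_cast at hre
      linear_combination (1/4) * hz4 - (1/4) * hre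
    · have h := Complex.abs_re_le_norm w
      rw [hwabs] at h
      obtain ⟨hl, hr⟩ := abs_le.mp h
      linarith
    · have h := Complex.abs_re_le_norm w
      rw [hwabs] at h
      obtain ⟨hl, hr⟩ := abs_le.mp h
      linarith
  -- every root of the minpoly satisfies g
  have hgu : (Polynomial.aeval ((u:ℂ))) g = 0 := by
    rw [hgdef]
    simp only [map_sub, map_mul, map_pow, Polynomial.aeval_C, Polynomial.aeval_X, map_one, map_ofNat]
    have : ((u:ℂ)) ^ q * 4 ^ p = (1 - (u:ℂ)) ^ p := by exact_mod_cast congrArg Complex.ofReal hrel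
    push_cast
    linear_combination this
  have hdvd : minpoly ℚ ((u:ℂ)) ∣ g := minpoly.dvd ℚ _ hgu
  have hrootg : ∀ z ∈ (minpoly ℚ x).rootSet ℂ, (Polynomial.aeval z) g = 0 := by
    intro z hz
    obtain ⟨c, hc⟩ := hdvd
    have hzμ : (Polynomial.aeval z) (minpoly ℚ ((u:ℂ))) = 0 := by
      rw [hμx]; exact (Polynomial.mem_rootSet.mp hz).2
    rw [hc, map_mul, hzμ, zero_mul]
  -- degree of minpoly is 1
  have hdeg : (minpoly ℚ ((u:ℂ))).natDegree = 1 := by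
    by_contra hne
    have hd2 : 2 ≤ (minpoly ℚ ((u:ℂ))).natDegree := by
      have := minpoly.natDegree_pos huint
      omega
    set μ : Polynomial ℚ := minpoly ℚ ((u:ℂ)) with hμdef
    have hsplits := IsAlgClosed.splits (μ.map (algebraMap ℚ ℂ))
    have hcard : (μ.aroots ℂ).card = μ.natDegree :=
      hsplits.natDegree_eq_card_roots.symm.trans (Polynomial.natDegree_map _)
    have hnodup : (μ.aroots ℂ).Nodup :=
      Polynomial.nodup_roots (((minpoly.irreducible huint).separable).map)
    have hfincard : 2 ≤ (μ.aroots ℂ).toFinset.card := by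
      rw [Multiset.toFinset_card_of_nodup hnodup, hcard]
      exact hd2
    obtain ⟨z₁, hz₁, z₂, hz₂, hne12⟩ := Finset.one_lt_card.mp hfincard
    have hz₁' : z₁ ∈ (minpoly ℚ x).rootSet ℂ := by
      rw [← hμx]; rw [Polynomial.rootSet_def]; exact_mod_cast hz₁
    have hz₂' : z₂ ∈ (minpoly ℚ x).rootSet ℂ := by
      rw [← hμx]; rw [Polynomial.rootSet_def]; exact_mod_cast hz₂
    obtain ⟨x₁, hzx₁, hx₁0, hx₁1⟩ := hroot z₁ hz₁'
    obtain ⟨x₂, hzx₂, hx₂0, hx₂1⟩ := hroot z₂ hz₂'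
    have hg₁ := hrootg z₁ hz₁'
    have hg₂ := hrootg z₂ hz₂'
    -- convert to real relations
    have hgr : ∀ (y : ℝ), (Polynomial.aeval ((y:ℂ))) g = 0 → y ^ q * 4 ^ p = (1 - y) ^ p := by
      intro y hy
      rw [hgdef] at hy
      simp only [map_sub, map_mul, map_pow, Polynomial.aeval_C, Polynomial.aeval_X, map_one, map_ofNat] at hy
      have : ((y ^ q * 4 ^ p - (1 - y) ^ p : ℝ) : ℂ) = 0 := by
        push_cast at hy ⊢
        linear_combination hy
      have := Complex.ofReal_eq_zero.mp this
      linarith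
    have hr₁ : x₁ ^ q * 4 ^ p = (1 - x₁) ^ p := hgr x₁ (hzx₁ ▸ hg₁)
    have hr₂ : x₂ ^ q * 4 ^ p = (1 - x₂) ^ p := hgr x₂ (hzx₂ ▸ hg₂)
    have : x₁ = x₂ := aux_inj hp hq hx₁0 hx₁1 hx₂0 hx₂1 hr₁ hr₂
    apply hne12
    rw [hzx₁, hzx₂, this]
  obtain ⟨r, hr⟩ := minpoly.natDegree_eq_one_iff.mp hdeg
  refine ⟨r, ?_⟩
  have : ((r:ℂ)) = ((u:ℂ)) := by rw [← hr, eq_ratCast]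
  exact_mod_cast this.symm

set_option maxHeartbeats 1000000 in
theorem stmt_3 (θ : ℝ) (h0 : 0 < θ) (h1 : θ < Real.pi / 2)
    (hrot : ∃ a : ℚ, θ / Real.pi = (a : ℝ))
    (hsize : ∃ b : ℚ, Real.log (Real.sin θ) / Real.log (Real.cos θ / 2) = (b : ℝ)) :
    θ = Real.pi / 4 := by
  obtain ⟨a, ha⟩ := hrot
  obtain ⟨b, hb⟩ := hsize
  have hπ : (0:ℝ) < Real.pi := Real.pi_pos
  have hθπ : θ = a * Real.pi := by
    field_simp at ha; linarith [ha]
  -- basic positivity facts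
  have hsin_pos : 0 < Real.sin θ := Real.sin_pos_of_pos_of_lt_pi h0 (by linarith)
  have hcos_pos : 0 < Real.cos θ := Real.cos_pos_of_mem_Ioo ⟨by linarith, h1⟩
  have hcos_le : Real.cos θ ≤ 1 := Real.cos_le_one θ
  have hsin_lt : Real.sin θ < 1 := by
    nlinarith [Real.sin_sq_add_cos_sq θ]
  have hlogs : Real.log (Real.sin θ) < 0 := Real.log_neg hsin_pos hsin_lt
  have hlogc : Real.log (Real.cos θ / 2) < 0 := Real.log_neg (by linarith) (by linarith)
  have hbpos : (0:ℝ) < (b:ℝ) := by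
    rw [← hb]; exact div_pos_iff.mpr (Or.inr ⟨hlogs, hlogc⟩)
  have hbq : (0:ℚ) < b := by exact_mod_cast hbpos
  set p : ℕ := b.num.toNat with hpdef
  set q : ℕ := b.den with hqdef
  have hp1 : 1 ≤ p := by
    have := Rat.num_pos.mpr hbq; omega
  have hq1 : 1 ≤ q := b.den_pos
  have hnum : (b.num : ℝ) = (p:ℝ) := by
    have h' := Rat.num_pos.mpr hbq
    rw [hpdef]
    exact_mod_cast (Int.toNat_of_nonneg h'.le).symm
  have hbpq : (b:ℝ) = (p:ℝ) / (q:ℝ) := by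
    rw [Rat.cast_def, hnum]
  -- the power relation
  have hlog_eq : Real.log (Real.sin θ) = (b:ℝ) * Real.log (Real.cos θ / 2) := by
    rw [← hb, div_mul_cancel₀ _ (ne_of_lt hlogc)]
  have hpow : Real.sin θ ^ q = (Real.cos θ / 2) ^ p := by
    have h1' : (q:ℝ) * Real.log (Real.sin θ) = (p:ℝ) * Real.log (Real.cos θ / 2) := by
      rw [hlog_eq, hbpq]
      have hq0 : (q:ℝ) ≠ 0 := by positivity
      field_simp
    have h2' : Real.log (Real.sin θ ^ q) = Real.log ((Real.cos θ / 2) ^ p) := by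
      rw [Real.log_pow, Real.log_pow]; exact_mod_cast h1'
    have h3' : (0:ℝ) < Real.sin θ ^ q := by positivity
    have h4' : (0:ℝ) < (Real.cos θ / 2) ^ p := by positivity
    rw [← Real.exp_log h3', ← Real.exp_log h4', h2']
  set u : ℝ := Real.sin θ ^ 2 with hudef
  have hcossq : Real.cos θ ^ 2 = 1 - u := by
    have := Real.sin_sq_add_cos_sq θ; linarith
  have hrel : u ^ q * 4 ^ p = (1 - u) ^ p := by
    have h5 : (Real.sin θ ^ q) ^ 2 = ((Real.cos θ / 2) ^ p) ^ 2 := by rw [hpow]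
    have e1 : (Real.sin θ ^ q) ^ 2 = u ^ q := by
      rw [hudef, ← pow_mul, ← pow_mul, mul_comm]
    have e2 : ((Real.cos θ / 2) ^ p) ^ 2 = (1 - u) ^ p / 4 ^ p := by
      calc ((Real.cos θ / 2) ^ p) ^ 2 = ((Real.cos θ / 2) ^ 2) ^ p := by
            rw [← pow_mul, ← pow_mul, mul_comm]
        _ = ((1 - u) / 4) ^ p := by rw [div_pow, hcossq]; norm_num
        _ = (1 - u) ^ p / 4 ^ p := div_pow _ _ _
    have h6 : u ^ q = (1 - u) ^ p / 4 ^ p := by rw [← e1, h5, e2]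
    rw [h6]
    field_simp
  -- root of unity
  set n : ℕ := a.den with hndef
  have hn1 : 1 ≤ n := a.den_pos
  have hapos : (0:ℚ) < a := by
    have : (0:ℝ) < (a:ℝ) := by
      rw [← ha]; positivity
    exact_mod_cast this
  set ζ : ℂ := Complex.exp (2 * θ * Complex.I) with hζdef
  have hζn : ζ ^ n = 1 := by
    rw [hζdef, ← Complex.exp_nat_mul]
    have hna : (n:ℝ) * θ = (a.num : ℝ) * Real.pi := by
      rw [hθπ]
      have : ((a.den : ℝ)) * (a:ℝ) = (a.num : ℝ) := by
        rw [mul_comm]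
        exact_mod_cast Rat.mul_den_eq_num a
      rw [hndef]
      push_cast
      nlinarith [this]
    have h' : (n:ℂ) * (θ:ℂ) = (a.num:ℂ) * (Real.pi:ℂ) := by
      exact_mod_cast congrArg Complex.ofReal hna
    have hexp : (n:ℂ) * (2 * (θ:ℂ) * Complex.I) = (a.num : ℂ) * (2 * (Real.pi:ℂ) * Complex.I) := by
      linear_combination (2*Complex.I) * h'
    rw [hexp]
    exact_mod_cast Complex.exp_int_mul_two_pi_mul_I a.num
  have hζinv : ζ⁻¹ = Complex.exp (-(2 * θ) * Complex.I) := by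
    rw [hζdef, ← Complex.exp_neg]; ring_nf
  have hcos2 : ζ + ζ⁻¹ = 2 * (Real.cos (2 * θ) : ℂ) := by
    rw [hζdef, hζinv, Complex.ofReal_cos, Complex.cos, Complex.ofReal_mul]
    push_cast
    ring_nf
  have hcos2u : Real.cos (2 * θ) = 1 - 2 * u := by
    rw [Real.cos_two_mul, hcossq]; ring
  have hu : ((u : ℂ)) = (2 - ζ - ζ⁻¹) / 4 := by
    have : (2:ℂ) - ζ - ζ⁻¹ = 2 - (ζ + ζ⁻¹) := by ring
    rw [this, hcos2, hcos2u]
    push_cast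
    ring
  obtain ⟨r, hr⟩ := u_rational hn1 hp1 hq1 hζn hu hrel
  -- Niven step: ζ + ζ⁻¹ = 2cos(2θ) is an algebraic integer and rational, hence an integer
  have hζint : IsIntegral ℤ ζ := by
    refine ⟨Polynomial.X ^ n - Polynomial.C 1, Polynomial.monic_X_pow_sub_C 1 (by omega), ?_⟩
    simp [hζn]
  have hζne : ζ ≠ 0 := by
    intro h
    rw [h, zero_pow (by omega : n ≠ 0)] at hζn
    exact zero_ne_one hζn
  have hinvpow : ζ⁻¹ = ζ ^ (n - 1) := by
    refine inv_eq_of_mul_eq_one_right ?_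
    rw [← pow_succ', Nat.sub_add_cancel hn1, hζn]
  have hinvint : IsIntegral ℤ (ζ⁻¹) := by rw [hinvpow]; exact hζint.pow _
  have hsumint : IsIntegral ℤ (ζ + ζ⁻¹) := hζint.add hinvint
  have hval : ζ + ζ⁻¹ = algebraMap ℚ ℂ (2 - 4 * r) := by
    rw [hcos2, hcos2u, hr, eq_ratCast]
    push_cast
    ring
  rw [hval] at hsumint
  have hint2 : IsIntegral ℤ ((2 : ℚ) - 4 * r) :=
    (isIntegral_algebraMap_iff ((algebraMap ℚ ℂ).injective)).mp hsumint
  obtain ⟨k, hk⟩ := IsIntegrallyClosed.isIntegral_iff.mp hint2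
  have hk' : ((k : ℚ) : ℝ) = 2 - 4 * (r:ℝ) := by
    rw [show ((k:ℚ):ℝ) = ((algebraMap ℤ ℚ k : ℚ) : ℝ) by norm_num, hk]
    push_cast; ring
  -- 2*cos(2θ) = k
  have hcosk : 2 * Real.cos (2*θ) = (k:ℝ) := by
    rw [hcos2u, hr]
    push_cast at hk' ⊢
    linarith
  have hsin2 : 0 < Real.sin (2*θ) := Real.sin_pos_of_pos_of_lt_pi (by linarith) (by linarith)
  have hc1 : Real.cos (2*θ) < 1 := by nlinarith [Real.sin_sq_add_cos_sq (2*θ)]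
  have hc2 : -1 < Real.cos (2*θ) := by nlinarith [Real.sin_sq_add_cos_sq (2*θ)]
  have hklt : k < 2 := by
    have : (k:ℝ) < 2 := by linarith
    exact_mod_cast this
  have hkgt : -2 < k := by
    have : (-2:ℝ) < (k:ℝ) := by linarith
    exact_mod_cast this
  interval_cases k
  · -- k = -1 : cos 2θ = -1/2, u = 3/4
    exfalso
    have hu34 : u = 3/4 := by
      push_cast at hcosk
      rw [hcos2u] at hcosk
      linarith
    rw [hu34] at hrel
    have hnat : (3:ℝ)^q * (4^p * 4^p) = 4^q := by
      have h4q : (0:ℝ) < 4^q := by positivity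
      have h4p : (0:ℝ) < 4^p := by positivity
      field_simp at hrel
      norm_num at hrel
      have e1 : (3/4:ℝ)^q * 4^q = 3^q := by rw [← mul_pow]; norm_num
      have e2 : (1/4:ℝ)^p * 4^p = 1 := by rw [← mul_pow]; norm_num
      linear_combination ((4:ℝ)^q*4^p)*hrel - ((4:ℝ)^p*4^p)*e1 + (4:ℝ)^q*e2
    have hnat' : (3:ℕ)^q * (4^p * 4^p) = 4^q := by exact_mod_cast hnat
    have h3dvd : (3:ℕ) ∣ 4^q := by
      rw [← hnat']
      exact Dvd.dvd.mul_right (dvd_pow_self 3 (by omega)) _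
    have := Nat.Prime.dvd_of_dvd_pow (by norm_num) h3dvd
    norm_num at this
  · -- k = 0 : cos 2θ = 0, θ = π/4
    have hc0 : Real.cos (2*θ) = 0 := by
      push_cast at hcosk; linarith
    have : 2*θ = Real.pi/2 := by
      apply Real.injOn_cos ⟨by linarith, by linarith⟩ ⟨by linarith, by linarith⟩
      rw [hc0, Real.cos_pi_div_two]
    linarith
  · -- k = 1 : cos 2θ = 1/2, u = 1/4
    exfalso
    have hu14 : u = 1/4 := by
      push_cast at hcosk
      rw [hcos2u] at hcosk
      linarith
    rw [hu14] at hrel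
    have hnat : (4:ℝ)^p * 4^p = 3^p * 4^q := by
      have h4q : (0:ℝ) < 4^q := by positivity
      have h4p : (0:ℝ) < 4^p := by positivity
      field_simp at hrel
      norm_num at hrel
      have e1 : (1/4:ℝ)^q * 4^q = 1 := by rw [← mul_pow]; norm_num
      have e2 : (3/4:ℝ)^p * 4^p = 3^p := by rw [← mul_pow]; norm_num
      linear_combination ((4:ℝ)^q*4^p)*hrel - ((4:ℝ)^p*4^p)*e1 + (4:ℝ)^q*e2
    have hnat' : (4:ℕ)^p * 4^p = 3^p * 4^q := by exact_mod_cast hnat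
    have h3dvd : (3:ℕ) ∣ 4^p * 4^p := by
      rw [hnat']
      exact Dvd.dvd.mul_right (dvd_pow_self 3 (by omega)) _
    have h3dvd' : (3:ℕ) ∣ 4^(p+p) := by rwa [pow_add]
    have := Nat.Prime.dvd_of_dvd_pow (by norm_num) h3dvd'
    norm_num at this
end

section
/- For a positive integer n, the number of integers k with 1 ≤ k < n, gcd(k, n) = 1, and 4k < n equals 1 if and only if n ∈ {5, 6, 7, 8, 10, 12, 18}. -/
lemma stmt_4_aux : ∀ n ∈ Finset.range 128,
    (((Finset.Ico 1 n).filter (fun k => Nat.gcd k n = 1 ∧ 4 * k < n)).card = 1 ↔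
      n ∈ ({5, 6, 7, 8, 10, 12, 18} : Finset ℕ)) := by
  set_option maxRecDepth 10000 in decide

theorem stmt_4 (n : ℕ) (hn : 0 < n) :
    ((Finset.Ico 1 n).filter (fun k => Nat.gcd k n = 1 ∧ 4 * k < n)).card = 1 ↔
      n ∈ ({5, 6, 7, 8, 10, 12, 18} : Finset ℕ) := by
  by_cases hsmall : n < 128
  · exact stmt_4_aux n (Finset.mem_range.mpr hsmall)
  · push_neg at hsmall
    have hnot : n ∉ ({5, 6, 7, 8, 10, 12, 18} : Finset ℕ) := by
      intro h; fin_cases h <;> omega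
    simp only [hnot, iff_false]
    -- find a prime r with r ∤ n, 2 ≤ r, 4 * r < n
    obtain ⟨p, pp, hp1, hp2⟩ := Nat.exists_prime_lt_and_le_two_mul (n / 16) (by omega)
    obtain ⟨q, qp, hq1, hq2⟩ := Nat.exists_prime_lt_and_le_two_mul (n / 8) (by omega)
    have hpq : p < q := by omega
    have hr : ∃ r, Nat.Prime r ∧ ¬ r ∣ n ∧ 4 * r < n := by
      by_cases hpd : p ∣ n
      · have hqd : ¬ q ∣ n := by
          intro hqd
          have hco : Nat.Coprime p q := (Nat.coprime_primes pp qp).mpr hpq.ne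
          have hle := Nat.le_of_dvd hn (hco.mul_dvd_of_dvd_of_dvd hpd hqd)
          have h9 : 9 ≤ p := by omega
          have h8q : n + 1 ≤ 8 * q := by omega
          nlinarith [hle, h9, h8q]
        refine ⟨q, qp, hqd, ?_⟩
        have h4 : 4 * q ≤ n := by omega
        rcases lt_or_eq_of_le h4 with h | h
        · omega
        · exact absurd ⟨4, by omega⟩ hqd
      · refine ⟨p, pp, hpd, ?_⟩
        have := pp.two_le
        omega
    obtain ⟨r, rp, hrd, hr4⟩ := hr
    intro hcard
    have h1mem : 1 ∈ (Finset.Ico 1 n).filter (fun k => Nat.gcd k n = 1 ∧ 4 * k < n) := by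
      simp [Finset.mem_filter, Finset.mem_Ico]
      omega
    have hrmem : r ∈ (Finset.Ico 1 n).filter (fun k => Nat.gcd k n = 1 ∧ 4 * k < n) := by
      have := rp.two_le
      simp only [Finset.mem_filter, Finset.mem_Ico]
      exact ⟨⟨by omega, by omega⟩, (rp.coprime_iff_not_dvd.mpr hrd), hr4⟩
    have : 1 < ((Finset.Ico 1 n).filter (fun k => Nat.gcd k n = 1 ∧ 4 * k < n)).card := by
      rw [Finset.one_lt_card]
      exact ⟨1, h1mem, r, hrmem, by have := rp.two_le; omega⟩
    omega
end

section
/- Consider the alphabet {H⁺, H⁻, L} and the substitution σ defined by σ(H⁺) = L H⁺, σ(H⁻) = H⁻ L, σ(L) = H⁺ H⁺ H⁻ H⁻, extended to words (finite lists of letters) by concatenation. Then for every natural number n, the word σⁿ(H⁺) contains neither the consecutive pair L L nor the consecutive pair H⁻ H⁺ as a contiguous subword. -/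
/-- The three-letter alphabet {H⁺, H⁻, L}. -/
inductive Letter : Type
  | Hp : Letter
  | Hm : Letter
  | L : Letter
  deriving DecidableEq

/-- The substitution σ on letters: σ(H⁺)=LH⁺, σ(H⁻)=H⁻L, σ(L)=H⁺H⁺H⁻H⁻. -/
def subst : Letter → List Letter
  | Letter.Hp => [Letter.L, Letter.Hp]
  | Letter.Hm => [Letter.Hm, Letter.L]
  | Letter.L => [Letter.Hp, Letter.Hp, Letter.Hm, Letter.Hm]

/-- The substitution σ extended to words by concatenation. -/
def substWord (w : List Letter) : List Letter := w.flatMap subst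

def allowed (a b : Letter) : Prop :=
  ¬ (a = Letter.L ∧ b = Letter.L) ∧ ¬ (a = Letter.Hm ∧ b = Letter.Hp)

instance : DecidablePred (fun p : Letter × Letter => allowed p.1 p.2) := by
  intro p; unfold allowed; infer_instance

instance (a b : Letter) : Decidable (allowed a b) := by
  unfold allowed; infer_instance

lemma chain_subst (a : Letter) : List.Chain' allowed (subst a) := by
  cases a <;> simp [subst, List.Chain', List.isChain_cons_cons, List.isChain_singleton, allowed] <;> decide

lemma substWord_cons (a : Letter) (w : List Letter) :
    substWord (a :: w) = subst a ++ substWord w := by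
  simp [substWord]

lemma chain_preserved : ∀ w : List Letter, List.Chain' allowed w →
    List.Chain' allowed (substWord w)
  | [] => fun _ => by simp [substWord, List.Chain', List.isChain_nil]
  | [a] => fun _ => by simpa [substWord] using chain_subst a
  | a :: b :: w => fun h => by
    rw [substWord_cons]
    rw [List.Chain', List.isChain_cons] at h
    obtain ⟨hab, hrest⟩ := h
    have hab' : allowed a b := hab b rfl
    have ih := chain_preserved (b :: w) hrest
    rw [List.Chain', List.isChain_append]
    refine ⟨chain_subst a, ih, ?_⟩
    intro x hx y hy
    rw [substWord_cons] at hy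
    have hbne : (subst b) ≠ [] := by cases b <;> simp [subst]
    rw [List.head?_append_of_ne_nil _ hbne] at hy
    -- x is the last letter of subst a, y is the first letter of subst b
    revert hab'
    cases a <;> cases b <;> simp [subst] at hx hy <;> subst hx <;> subst hy <;> decide

lemma chain_iter (n : ℕ) : List.Chain' allowed (substWord^[n] [Letter.Hp]) := by
  induction n with
  | zero => simp [List.Chain', List.isChain_singleton]
  | succ k ih =>
    rw [Function.iterate_succ_apply']
    exact chain_preserved _ ih

theorem stmt_5 (n : ℕ) :
    ¬ ([Letter.L, Letter.L] <:+: substWord^[n] [Letter.Hp]) ∧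
    ¬ ([Letter.Hm, Letter.Hp] <:+: substWord^[n] [Letter.Hp]) := by
  have hc := chain_iter n
  constructor <;> intro h <;>
    have := hc.infix h <;> simp [List.Chain', List.isChain_cons_cons, List.isChain_singleton, allowed] at this
end

section
/- Consider the alphabet {H⁺, H⁻, L} and the substitution σ defined by σ(H⁺) = L H⁺, σ(H⁻) = H⁻ L, σ(L) = H⁺ H⁺ H⁻ H⁻, extended to words (finite lists of letters) by concatenation. Then for every n ≥ 1 the word σⁿ(H⁺) has even length 2ℓₙ; define f(n) to be the number of occurrences of L among the first ℓₙ letters of σⁿ(H⁺) minus the number of occurrences of L among the last ℓₙ letters. If n ≥ 1 and |f(n)| > 6, then |f(n+1)| ≥ |f(n)| + 2. -/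
/-- The word σⁿ(H⁺). -/
def word (n : ℕ) : List Letter := substWord^[n] [Letter.Hp]

/-- Half the length of σⁿ(H⁺). -/
def halfLen (n : ℕ) : ℕ := (word n).length / 2

/-- `f n` is the number of L's in the first half of σⁿ(H⁺) minus
the number of L's in the second half. -/
def fImb (n : ℕ) : ℤ :=
  (((word n).take (halfLen n)).count Letter.L : ℤ) -
    (((word n).drop (halfLen n)).count Letter.L : ℤ)

lemma substWord_append (u v : List Letter) :
    substWord (u ++ v) = substWord u ++ substWord v := by simp [substWord]

def R1 (a b : Letter) : Prop := ¬(a = Letter.L ∧ b = Letter.L)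

lemma memL_subst {a : Letter} (h : a ≠ Letter.L) : Letter.L ∈ subst a := by
  cases a <;> simp [subst] <;> exact h rfl

lemma len_subst_ne {a : Letter} (h : a ≠ Letter.L) : (subst a).length = 2 := by
  cases a <;> first | rfl | exact absurd rfl h

lemma B_suf (w : List Letter) (a : Letter) (ha : a ≠ Letter.L) (s : List Letter)
    (hs : s <:+ substWord (w ++ [a])) (hlen : 3 ≤ s.length) : Letter.L ∈ s := by
  rw [substWord_append] at hs
  have h1 : subst a <:+ substWord w ++ substWord [a] := by
    have : substWord [a] = subst a := by simp [substWord]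
    rw [this]; exact List.suffix_append _ _
  rcases List.suffix_or_suffix_of_suffix hs h1 with h2 | h2
  · have := h2.length_le
    rw [len_subst_ne ha] at this; omega
  · exact h2.subset (memL_subst ha)

lemma B_pre (w : List Letter) (a : Letter) (ha : a ≠ Letter.L) (s : List Letter)
    (hs : s <+: substWord (a :: w)) (hlen : 3 ≤ s.length) : Letter.L ∈ s := by
  rw [substWord_cons] at hs
  have h1 : subst a <+: subst a ++ substWord w := List.prefix_append _ _
  rcases List.prefix_or_prefix_of_prefix hs h1 with h2 | h2
  · have := h2.length_le
    rw [len_subst_ne ha] at this; omega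
  · exact h2.subset (memL_subst ha)

lemma A_suf (w : List Letter) (hch : List.Chain' R1 w) (s : List Letter)
    (hs : s <:+ substWord w) (hlen : 7 ≤ s.length) : Letter.L ∈ s := by
  rcases w.eq_nil_or_concat with rfl | ⟨w', a, rfl⟩
  · have : substWord ([] : List Letter) = [] := rfl
    rw [this, List.suffix_nil] at hs
    simp [hs] at hlen
  rw [List.concat_eq_append] at hch hs
  by_cases ha : a = Letter.L
  · subst ha
    rw [substWord_append] at hs
    obtain ⟨t, ht⟩ := hs
    rcases List.append_eq_append_iff.mp ht with ⟨s', h1, h2⟩ | ⟨c', h1, h2⟩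
    · -- s = s' ++ substWord [L], s' suffix of substWord w'
      have hblk : (substWord [Letter.L]).length = 4 := rfl
      have hs' : s' <:+ substWord w' := ⟨t, h1.symm⟩
      have hlen' : 3 ≤ s'.length := by
        have := congrArg List.length h2
        simp [hblk] at this
        omega
      rcases w'.eq_nil_or_concat with rfl | ⟨w'', b, rfl⟩
      · have : substWord ([] : List Letter) = [] := rfl
        rw [this, List.suffix_nil] at hs'
        simp [hs'] at hlen'
      rw [List.concat_eq_append] at hs' hch
      have hb : b ≠ Letter.L := by
        intro hbL
        have hsuf : [b, Letter.L] <:+ (w'' ++ [b]) ++ [Letter.L] := by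
          rw [List.append_assoc]
          exact (List.suffix_append w'' ([b] ++ [Letter.L]))
        have := List.isChain_pair.mp (hch.suffix hsuf)
        exact this ⟨hbL, rfl⟩
      have := B_suf w'' b hb s' hs' hlen'
      rw [h2]
      exact List.mem_append_left _ this
    · -- substWord [L] = c' ++ s, so s is short
      have := congrArg List.length h2
      have hblk : (substWord [Letter.L]).length = 4 := rfl
      simp [hblk] at this
      omega
  · exact B_suf w' a ha s hs (by omega)

lemma A_pre (w : List Letter) (hch : List.Chain' R1 w) (s : List Letter)
    (hs : s <+: substWord w) (hlen : 7 ≤ s.length) : Letter.L ∈ s := by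
  cases w with
  | nil =>
    have : substWord ([] : List Letter) = [] := rfl
    rw [this, List.prefix_nil] at hs
    simp [hs] at hlen
  | cons a w' =>
    by_cases ha : a = Letter.L
    · subst ha
      rw [substWord_cons] at hs
      obtain ⟨t, ht⟩ := hs
      rcases List.append_eq_append_iff.mp ht with ⟨s', h1, h2⟩ | ⟨c', h1, h2⟩
      · -- subst L = s ++ s' : s short
        have := congrArg List.length h1
        have hblk : (subst Letter.L).length = 4 := rfl
        simp [hblk] at this
        omega
      · -- s = subst L ++ c', c' prefix of substWord w'
        have hc' : c' <+: substWord w' := ⟨t, h2.symm⟩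
        have hlen' : 3 ≤ c'.length := by
          have := congrArg List.length h1
          have hblk : (subst Letter.L).length = 4 := rfl
          simp [hblk] at this
          omega
        cases w' with
        | nil =>
          have : substWord ([] : List Letter) = [] := rfl
          rw [this, List.prefix_nil] at hc'
          simp [hc'] at hlen'
        | cons b w'' =>
          have hb : b ≠ Letter.L := by
            intro hbL
            have := (List.isChain_cons_cons.mp hch).1
            exact this ⟨rfl, hbL⟩
          have := B_pre w'' b hb c' hc' hlen'
          rw [h1]
          exact List.mem_append_right _ this
    · exact B_pre w' a ha s hs (by omega)

def R2 (a b : Letter) : Prop := ¬(a = Letter.Hm ∧ b = Letter.Hp)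

lemma T1 {w : List Letter} (h : List.Chain' R2 w) : List.Chain' R1 (substWord w) := by
  induction w with
  | nil => simp [substWord, List.Chain']
  | cons a w ih =>
    rw [substWord_cons, List.Chain', List.isChain_append]
    refine ⟨by cases a <;> simp [subst, List.isChain_cons_cons, R1], ih h.tail, ?_⟩
    intro x hx y hy
    cases w with
    | nil => simp [substWord] at hy
    | cons b w' =>
      have hR : R2 a b := (List.isChain_cons_cons.mp h).1
      rw [substWord_cons] at hy
      cases a <;> cases b <;>
        simp only [subst, List.getLast?, List.getLast, List.head?, List.cons_append,
          Option.mem_def, Option.some_inj] at hx hy <;>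
        subst hx <;> subst hy <;> simp [R1] <;> exact hR ⟨rfl, rfl⟩

lemma T2 {w : List Letter} (h : List.Chain' R1 w) : List.Chain' R2 (substWord w) := by
  induction w with
  | nil => simp [substWord, List.Chain']
  | cons a w ih =>
    rw [substWord_cons, List.Chain', List.isChain_append]
    refine ⟨by cases a <;> simp [subst, List.isChain_cons_cons, R2], ih h.tail, ?_⟩
    intro x hx y hy
    cases w with
    | nil => simp [substWord] at hy
    | cons b w' =>
      have hR : R1 a b := (List.isChain_cons_cons.mp h).1
      rw [substWord_cons] at hy
      cases a <;> cases b <;>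
        simp only [subst, List.getLast?, List.getLast, List.head?, List.cons_append,
          Option.mem_def, Option.some_inj] at hx hy <;>
        subst hx <;> subst hy <;> simp [R2] <;> exact hR ⟨rfl, rfl⟩

lemma len_subst (w : List Letter) :
    (substWord w).length = 2 * w.length + 2 * w.count Letter.L := by
  induction w with
  | nil => simp [substWord]
  | cons a w ih =>
    rw [substWord_cons, List.length_append, ih]
    cases a <;> simp [subst, List.count_cons] <;> omega

lemma countL_subst (w : List Letter) :
    (substWord w).count Letter.L = w.count Letter.Hp + w.count Letter.Hm := by
  induction w with
  | nil => simp [substWord]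
  | cons a w ih =>
    rw [substWord_cons, List.count_append, ih]
    cases a <;> simp [subst, List.count_cons] <;> omega

lemma count_total (w : List Letter) :
    w.count Letter.Hp + w.count Letter.Hm + w.count Letter.L = w.length := by
  induction w with
  | nil => simp
  | cons a w ih => cases a <;> simp [List.count_cons] <;> omega

lemma word_succ (n : ℕ) : word (n + 1) = substWord (word n) :=
  Function.iterate_succ_apply' _ _ _

lemma word_chain (n : ℕ) : List.Chain' R1 (word n) ∧ List.Chain' R2 (word n) := by
  induction n with
  | zero => constructor <;> simp [word, List.Chain']
  | succ n ih => rw [word_succ]; exact ⟨T1 ih.2, T2 ih.1⟩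

theorem stmt_7 (n : ℕ) (hn : 1 ≤ n) :
    (word n).length = 2 * halfLen n ∧
    (6 < |fImb n| → |fImb n| + 2 ≤ |fImb (n + 1)|) := by
  obtain ⟨m, rfl⟩ : ∃ m, n = m + 1 := ⟨n - 1, by omega⟩
  have hlen1 : (word (m + 1)).length
      = 2 * ((word m).length + (word m).count Letter.L) := by
    rw [word_succ, len_subst]; ring
  have hhalf1 : (word (m + 1)).length = 2 * halfLen (m + 1) := by
    unfold halfLen; omega
  refine ⟨hhalf1, ?_⟩
  intro h6
  set ℓ := halfLen (m + 1) with hℓ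
  set W := word (m + 1) with hWdef
  set P := W.take ℓ with hPdef
  set Q := W.drop ℓ with hQdef
  have hPQ : P ++ Q = W := List.take_append_drop ℓ W
  have hPlen : P.length = ℓ := by rw [hPdef, List.length_take]; omega
  have hQlen : Q.length = ℓ := by rw [hQdef, List.length_drop]; omega
  set p := P.count Letter.L with hpdef
  set q := Q.count Letter.L with hqdef
  have e1 : fImb (m + 1) = (p : ℤ) - (q : ℤ) := rfl
  have hcP := count_total P
  have hcQ := count_total Q
  have hsP : (substWord P).count Letter.L + p = ℓ := by
    rw [countL_subst]; omega
  have hsQ : (substWord Q).count Letter.L + q = ℓ := by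
    rw [countL_subst]; omega
  have hlenP : (substWord P).length = 2 * ℓ + 2 * p := by
    rw [len_subst, hPlen]
  have hlenQ : (substWord Q).length = 2 * ℓ + 2 * q := by
    rw [len_subst, hQlen]
  have hW2 : word (m + 2) = substWord P ++ substWord Q := by
    rw [word_succ, ← hWdef, ← hPQ, substWord_append]
  have hlen2 : (word (m + 2)).length = 4 * ℓ + 2 * p + 2 * q := by
    rw [hW2, List.length_append]; omega
  have hhalf2 : halfLen (m + 2) = 2 * ℓ + p + q := by
    unfold halfLen; omega
  have hchW : List.Chain' R1 W := (word_chain (m + 1)).1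
  have hchP : List.Chain' R1 P := hchW.prefix (List.take_prefix ℓ W)
  have hchQ : List.Chain' R1 Q := hchW.suffix (List.drop_suffix ℓ W)
  rw [e1] at h6 ⊢
  rcases abs_cases ((p : ℤ) - (q : ℤ)) with ⟨hab, hsign⟩ | ⟨hab, hsign⟩
  · -- p ≥ q + 7
    have hge : q + 7 ≤ p := by omega
    set A := (substWord P).take (2 * ℓ + p + q) with hAdef
    set B := (substWord P).drop (2 * ℓ + p + q) with hBdef
    have hAB : A ++ B = substWord P := List.take_append_drop _ _
    have hAlen : A.length = halfLen (m + 2) := by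
      rw [hAdef, List.length_take, hhalf2]; omega
    have hBlen : 7 ≤ B.length := by
      rw [hBdef, List.length_drop]; omega
    have hW2' : word (m + 2) = A ++ (B ++ substWord Q) := by
      rw [hW2, ← hAB, List.append_assoc]
    have htake : (word (m + 2)).take (halfLen (m + 2)) = A := by
      rw [hW2']; exact List.take_left' hAlen
    have hdrop : (word (m + 2)).drop (halfLen (m + 2)) = B ++ substWord Q := by
      rw [hW2']; exact List.drop_left' hAlen
    have e2 : fImb (m + 2) = (A.count Letter.L : ℤ) -
        ((B.count Letter.L : ℤ) + ((substWord Q).count Letter.L : ℤ)) := by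
      unfold fImb; rw [htake, hdrop, List.count_append]; push_cast; ring
    have hsplit : A.count Letter.L + B.count Letter.L = (substWord P).count Letter.L := by
      rw [← List.count_append, hAB]
    have hc : 1 ≤ B.count Letter.L := by
      have hmem : Letter.L ∈ B := A_suf P hchP B (hBdef ▸ List.drop_suffix _ _) hBlen
      exact List.count_pos_iff.mpr hmem
    have habs2 : |fImb (m + 2)| = ((B.count Letter.L : ℤ) +
        ((substWord Q).count Letter.L : ℤ)) - (A.count Letter.L : ℤ) := by
      rw [e2, abs_of_nonpos (by omega)]; ring
    rw [hab, habs2]; omega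
  · -- q ≥ p + 7
    have hge : p + 7 ≤ q := by omega
    set C := (substWord Q).take (q - p) with hCdef
    set D := (substWord Q).drop (q - p) with hDdef
    have hCD : C ++ D = substWord Q := List.take_append_drop _ _
    have hClen : C.length = q - p := by
      rw [hCdef, List.length_take]; omega
    have hClen7 : 7 ≤ C.length := by omega
    have hW2' : word (m + 2) = (substWord P ++ C) ++ D := by
      rw [hW2, ← hCD, List.append_assoc]
    have hPClen : (substWord P ++ C).length = halfLen (m + 2) := by
      rw [List.length_append, hhalf2, hlenP, hClen]; omega
    have htake : (word (m + 2)).take (halfLen (m + 2)) = substWord P ++ C := by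
      rw [hW2']; exact List.take_left' hPClen
    have hdrop : (word (m + 2)).drop (halfLen (m + 2)) = D := by
      rw [hW2']; exact List.drop_left' hPClen
    have e2 : fImb (m + 2) = (((substWord P).count Letter.L : ℤ) +
        (C.count Letter.L : ℤ)) - (D.count Letter.L : ℤ) := by
      unfold fImb; rw [htake, hdrop, List.count_append]; push_cast; ring
    have hsplit : C.count Letter.L + D.count Letter.L = (substWord Q).count Letter.L := by
      rw [← List.count_append, hCD]
    have hc : 1 ≤ C.count Letter.L := by
      have hmem : Letter.L ∈ C := A_pre Q hchQ C (hCdef ▸ List.take_prefix _ _) hClen7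
      exact List.count_pos_iff.mpr hmem
    have habs2 : |fImb (m + 2)| = (((substWord P).count Letter.L : ℤ) +
        (C.count Letter.L : ℤ)) - (D.count Letter.L : ℤ) := by
      rw [e2, abs_of_nonneg (by omega)]
    rw [hab, habs2]; omega
end

section
/- Let p and q be distinct coprime positive integers and set m = max(p,q). Let M be the m×m rational matrix (with rows and columns indexed by 1,…,m) whose (i,j) entry equals 1 if j = i+1, whose (p,1) entry equals 1, whose (q,1) entry equals 4, and whose remaining entries are 0. Then the characteristic polynomial of M equals λ^q − λ^{q−p} − 4 if p < q, and equals λ^p − 4λ^{p−q} − 1 if p > q. -/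
open Polynomial Matrix

private lemma det_aux {S : Type*} [CommRing S] (x : S) : ∀ (n : ℕ) (c : Fin n → S),
    (Matrix.of fun i j : Fin n => (if i = j then x else 0) -
      (if (j : ℕ) = (i : ℕ) + 1 then 1 else 0) -
      (if (j : ℕ) = 0 then c i else 0)).det
    = x ^ n - ∑ i : Fin n, c i * x ^ (n - 1 - (i : ℕ)) := by
  intro n
  induction n with
  | zero => intro c; simp [Matrix.det_fin_zero]
  | succ n ih =>
    intro c
    match n with
    | 0 =>
      simp [Matrix.det_fin_one, Fin.sum_univ_one]
    | Nat.succ k =>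
      set n := k + 1
      rw [Matrix.det_succ_row _ (Fin.last n)]
      have hz : ∀ j : Fin (n+1), j ≠ 0 → j ≠ Fin.last n →
          (Matrix.of fun i j : Fin (n+1) => (if i = j then x else 0) -
            (if (j : ℕ) = (i : ℕ) + 1 then 1 else 0) -
            (if (j : ℕ) = 0 then c i else 0)) (Fin.last n) j = 0 := by
        intro j hj0 hjl
        have h1 : ¬ (Fin.last n = j) := fun h => hjl h.symm
        have h2 : ¬ ((j : ℕ) = n + 1) := by
          have := j.isLt; omega
        have h3 : ¬ ((j : ℕ) = 0) := by
          exact fun h => hj0 (Fin.ext h)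
        simp only [Matrix.of_apply, if_neg h1, if_neg h3, Fin.val_last, if_neg h2]
        ring
      set B := (Matrix.of fun i j : Fin (n+1) => (if i = j then x else 0) -
          (if (j : ℕ) = (i : ℕ) + 1 then 1 else 0) -
          (if (j : ℕ) = 0 then c i else 0)) with hB
      set f : Fin (n+1) → S := fun j => (-1 : S) ^ ((Fin.last n : ℕ) + (j : ℕ)) * B (Fin.last n) j *
          (B.submatrix (Fin.last n).succAbove j.succAbove).det with hf
      have h0l : (0 : Fin (n+1)) ≠ Fin.last n := by
        simp [Fin.ext_iff, Fin.last]
      have hsum : ∑ j : Fin (n+1), f j = f 0 + f (Fin.last n) := by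
        have : ∀ j : Fin (n+1), f j =
            (if j = 0 then f 0 else 0) + (if j = Fin.last n then f (Fin.last n) else 0) := by
          intro j
          by_cases hj0 : j = 0
          · subst hj0; rw [if_pos rfl, if_neg h0l, add_zero]
          · by_cases hjl : j = Fin.last n
            · subst hjl; rw [if_neg (fun h => h0l h.symm), if_pos rfl, zero_add]
            · rw [if_neg hj0, if_neg hjl, add_zero, hf]
              simp only []
              rw [hz j hj0 hjl]
              ring
        rw [Finset.sum_congr rfl (fun j _ => this j)]
        simp [Finset.sum_add_distrib]
      rw [hsum]
      -- compute f (Fin.last n)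
      have hlast : f (Fin.last n) = x * (x ^ n - ∑ i : Fin n, c i.castSucc * x ^ (n - 1 - (i : ℕ))) := by
        have hminor : B.submatrix (Fin.last n).succAbove (Fin.last n).succAbove =
            (Matrix.of fun i j : Fin n => (if i = j then x else 0) -
              (if (j : ℕ) = (i : ℕ) + 1 then 1 else 0) -
              (if (j : ℕ) = 0 then c i.castSucc else 0)) := by
          ext i' j'
          simp [hB, Fin.succAbove_last, Fin.castSucc_inj]
        rw [hf]
        simp only []
        rw [hminor, ih]
        have hBll : B (Fin.last n) (Fin.last n) = x := by
          have h3 : ¬ ((Fin.last n : ℕ) = 0) := by simp [Fin.last]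
          have h2 : ¬ ((Fin.last n : ℕ) = (Fin.last n : ℕ) + 1) := by omega
          simp [hB, h2, h3]
        rw [hBll]
        rw [show ((-1 : S)) ^ ((Fin.last n : ℕ) + (Fin.last n : ℕ)) = 1 by
          rw [← two_mul, pow_mul]; norm_num]
        rw [one_mul]
      have hzero : f 0 = - c (Fin.last n) := by
        have hB0 : B (Fin.last n) 0 = - c (Fin.last n) := by
          have h1 : ¬ (Fin.last n = 0) := fun h => h0l h.symm
          have h2 : ¬ ((0 : ℕ) = (Fin.last n : ℕ) + 1) := by omega
          simp [hB, h1, h2]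
        have hminor : (B.submatrix (Fin.last n).succAbove (0 : Fin (n+1)).succAbove).det
            = (-1 : S) ^ n := by
          have hlow : (B.submatrix (Fin.last n).succAbove (0 : Fin (n+1)).succAbove).BlockTriangular
              OrderDual.toDual := by
            intro i' j' hij
            have hij' : (i' : ℕ) < (j' : ℕ) := hij
            have e1 : ¬ (Fin.castSucc i' = Fin.succ j') := by
              simp [Fin.ext_iff]; omega
            simp [hB, Fin.succAbove_last, Fin.succAbove_zero, e1]
            omega
          rw [Matrix.det_of_lowerTriangular _ hlow]
          have hdiag : ∀ i' : Fin n,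
              (B.submatrix (Fin.last n).succAbove (0 : Fin (n+1)).succAbove) i' i' = -1 := by
            intro i'
            have e1 : ¬ (Fin.castSucc i' = Fin.succ i') := by
              simp [Fin.ext_iff]
            simp [hB, Fin.succAbove_last, Fin.succAbove_zero, e1]
          rw [Finset.prod_congr rfl (fun i' _ => hdiag i')]
          simp
        rw [hf]
        simp only []
        rw [hB0, hminor]
        have h0 : ((0 : Fin (n+1)) : ℕ) = 0 := rfl
        have hpow : ((-1 : S)) ^ (n : ℕ) * (-1 : S) ^ (n : ℕ) = 1 := by
          rw [← pow_add, ← two_mul, pow_mul]; norm_num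
        rw [h0, add_zero, Fin.val_last]
        linear_combination (-(c (Fin.last n))) * hpow
      rw [hlast, hzero]
      have hexp : ∀ i' : Fin n, x * (c i'.castSucc * x ^ (n - 1 - (i' : ℕ)))
          = c i'.castSucc * x ^ (n + 1 - 1 - ((i'.castSucc : Fin (n+1)) : ℕ)) := by
        intro i'
        have h : n - 1 - (i' : ℕ) + 1 = n + 1 - 1 - (i' : ℕ) := by
          have := i'.isLt; omega
        rw [Fin.coe_castSucc, ← h, pow_succ]
        ring
      rw [mul_sub, Finset.mul_sum, Finset.sum_congr rfl (fun i' _ => hexp i')]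
      conv_rhs => rw [Fin.sum_univ_castSucc]
      rw [Fin.val_last]
      have hnn : n + 1 - 1 - n = 0 := by omega
      rw [show k.succ + 1 - 1 - k.succ = 0 from hnn, pow_zero,
        show x ^ (k.succ + 1) = x * x ^ n from by rw [pow_succ']]
      ring
theorem stmt_9 (p q : ℕ) (hp : 0 < p) (hq : 0 < q) (hne : p ≠ q)
    (hco : Nat.Coprime p q) (m : ℕ) (hm : m = max p q)
    (M : Matrix (Fin m) (Fin m) ℚ)
    (hM : ∀ i j : Fin m, M i j =
      if (j : ℕ) = (i : ℕ) + 1 then 1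
      else if (j : ℕ) = 0 ∧ (i : ℕ) + 1 = p then 1
      else if (j : ℕ) = 0 ∧ (i : ℕ) + 1 = q then 4
      else 0) :
    (p < q → M.charpoly = X ^ q - X ^ (q - p) - 4) ∧
    (q < p → M.charpoly = X ^ p - 4 * X ^ (p - q) - 1) := by
  have hpm : p ≤ m := by omega
  have hqm : q ≤ m := by omega
  have hm1 : 0 < m := by omega
  set c : Fin m → ℚ[X] := fun i =>
    if (i : ℕ) + 1 = p then 1 else if (i : ℕ) + 1 = q then 4 else 0 with hc
  have hchar : charmatrix M = Matrix.of fun i j : Fin m =>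
      (if i = j then (X : ℚ[X]) else 0) -
      (if (j : ℕ) = (i : ℕ) + 1 then 1 else 0) -
      (if (j : ℕ) = 0 then c i else 0) := by
    refine Matrix.ext fun i j => ?_
    simp only [hc]
    by_cases hij : i = j
    · subst hij
      rw [charmatrix_apply_eq, hM, Matrix.of_apply, if_pos rfl]
      split_ifs <;> first | omega | simp [map_ofNat]
    · rw [charmatrix_apply_ne _ _ _ hij, hM, Matrix.of_apply, if_neg hij]
      split_ifs <;> first | omega | simp [map_ofNat]
  have hdet : M.charpoly = X ^ m - ∑ i : Fin m, c i * X ^ (m - 1 - (i : ℕ)) := by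
    rw [Matrix.charpoly, hchar, det_aux]
  -- evaluate the sum
  set ip : Fin m := ⟨p - 1, by omega⟩ with hip
  set iq : Fin m := ⟨q - 1, by omega⟩ with hiq
  have hipq : ip ≠ iq := by
    intro h
    rw [hip, hiq, Fin.mk.injEq] at h
    omega
  have hcip : c ip = 1 := by
    simp only [hc, hip]
    rw [if_pos (show p - 1 + 1 = p by omega)]
  have hciq : c iq = 4 := by
    simp only [hc, hiq]
    rw [if_neg (show ¬(q - 1 + 1 = p) by omega), if_pos (show q - 1 + 1 = q by omega)]
  have hsum : ∑ i : Fin m, c i * X ^ (m - 1 - (i : ℕ))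
      = X ^ (m - p) + 4 * X ^ (m - q) := by
    have hterm : ∀ i : Fin m, c i * X ^ (m - 1 - (i : ℕ)) =
        (if i = ip then c ip * X ^ (m - 1 - (ip : ℕ)) else 0) +
        (if i = iq then c iq * X ^ (m - 1 - (iq : ℕ)) else 0) := by
      intro i
      by_cases h1 : i = ip
      · subst h1; rw [if_pos rfl, if_neg hipq, add_zero]
      · by_cases h2 : i = iq
        · subst h2; rw [if_neg h1, if_pos rfl, zero_add]
        · rw [if_neg h1, if_neg h2, add_zero]
          have e1 : ¬ ((i : ℕ) + 1 = p) := by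
            simp only [hip, Fin.ext_iff] at h1; omega
          have e2 : ¬ ((i : ℕ) + 1 = q) := by
            simp only [hiq, Fin.ext_iff] at h2; omega
          simp only [hc, if_neg e1, if_neg e2, zero_mul]
    rw [Finset.sum_congr rfl (fun i _ => hterm i)]
    rw [Finset.sum_add_distrib, Finset.sum_ite_eq' Finset.univ ip,
      Finset.sum_ite_eq' Finset.univ iq, if_pos (Finset.mem_univ _),
      if_pos (Finset.mem_univ _), hcip, hciq]
    have e1 : m - 1 - ((ip : Fin m) : ℕ) = m - p := by simp only [hip]; omega
    have e2 : m - 1 - ((iq : Fin m) : ℕ) = m - q := by simp only [hiq]; omega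
    rw [e1, e2, one_mul]
  rw [hsum] at hdet
  constructor
  · intro hlt
    have hmq : m = q := by omega
    subst hmq
    rw [hdet]
    have : m - m = 0 := by omega
    rw [this, pow_zero]
    ring
  · intro hlt
    have hmp : m = p := by omega
    subst hmp
    rw [hdet]
    have : m - m = 0 := by omega
    rw [this, pow_zero]
    ring
end

section
/- Let p < q be coprime positive integers and let P(z) = z^q − z^{q−p} − 4, regarded as a polynomial over ℂ. Let r be the unique real number in (0,1) satisfying r^{2p} + 4r^{2q} = 1. Then: (i) r^{−2} is a root of P and it is the only positive real root; (ii) every complex root z of P with z ≠ r^{−2} satisfies |z| < r^{−2}; (iii) every complex root z of P satisfies |z| > 1; (iv) all roots of P are simple. -/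
open Polynomial

lemma aux_uniq (p q : ℕ) (hpq : p < q) (hp : 0 < p) :
    ∀ x y : ℝ, 0 < x → 0 < y → x ^ q = x ^ (q - p) + 4 → y ^ q = y ^ (q - p) + 4 → x = y := by
  intro x y hx hy hxe hye
  have key : ∀ t : ℝ, 0 < t → t ^ q = t ^ (q - p) + 4 → 1 < t := by
    intro t ht hte
    by_contra h
    push_neg at h
    have h1 : t ^ q ≤ t ^ (q - p) := by
      exact pow_le_pow_of_le_one ht.le h (by omega)
    nlinarith
  have hx1 := key x hx hxe
  have hy1 := key y hy hye
  have hg : ∀ t : ℝ, 1 < t → t ^ q = t ^ (q - p) + 4 →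
      t ^ (q - p) * (t ^ p - 1) = 4 := by
    intro t ht hte
    have : t ^ (q - p) * t ^ p = t ^ q := by
      rw [← pow_add]; congr 1; omega
    nlinarith
  have hgx := hg x hx1 hxe
  have hgy := hg y hy1 hye
  by_contra hne
  rcases lt_or_gt_of_ne hne with h | h
  · have h1 : x ^ (q - p) ≤ y ^ (q - p) := by
      apply pow_le_pow_left₀ (by linarith) h.le
    have h2 : x ^ p < y ^ p := by
      apply pow_lt_pow_left₀ h (by linarith)
      omega
    nlinarith [pow_pos (lt_trans one_pos hy1) (q - p), one_lt_pow₀ hx1 (by omega : p ≠ 0)]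
  · have h1 : y ^ (q - p) ≤ x ^ (q - p) := by
      apply pow_le_pow_left₀ (by linarith) h.le
    have h2 : y ^ p < x ^ p := by
      apply pow_lt_pow_left₀ h (by linarith)
      omega
    nlinarith [pow_pos (lt_trans one_pos hx1) (q - p), one_lt_pow₀ hy1 (by omega : p ≠ 0)]

theorem stmt_10 (p q : ℕ) (hpq : p < q) (hp : 0 < p) (hco : Nat.Coprime p q)
    (r : ℝ) (hr0 : 0 < r) (hr1 : r < 1) (hr : r ^ (2 * p) + 4 * r ^ (2 * q) = 1)
    (P : Polynomial ℂ) (hP : P = X ^ q - X ^ (q - p) - C 4) :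
    P.eval ((r : ℂ)⁻¹ ^ 2) = 0 ∧
    (∀ x : ℝ, 0 < x → P.eval (x : ℂ) = 0 → (x : ℂ) = (r : ℂ)⁻¹ ^ 2) ∧
    (∀ z : ℂ, P.eval z = 0 → z ≠ (r : ℂ)⁻¹ ^ 2 → ‖z‖ < r⁻¹ ^ 2) ∧
    (∀ z : ℂ, P.eval z = 0 → 1 < ‖z‖) ∧
    (∀ z : ℂ, P.IsRoot z → P.rootMultiplicity z = 1) := by
  have hq : 0 < q := hp.trans hpq
  have hqp : 0 < q - p := by omega
  obtain ⟨s, hs⟩ : ∃ s : ℝ, s = r ^ 2 := ⟨_, rfl⟩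
  have hs0 : 0 < s := by rw [hs]; positivity
  have hs1 : s < 1 := by rw [hs]; nlinarith
  rw [pow_mul, pow_mul, ← hs] at hr
  obtain ⟨L, hLdef⟩ : ∃ L : ℝ, L = s⁻¹ := ⟨_, rfl⟩
  have hL1 : 1 < L := hLdef ▸ (one_lt_inv₀ hs0).mpr hs1
  have hL0 : 0 < L := by linarith
  have hLs : L * s = 1 := by rw [hLdef]; exact inv_mul_cancel₀ hs0.ne'
  have hLe : L ^ q = L ^ (q - p) + 4 := by
    have h1 : s ^ (q - p) * s ^ p = s ^ q := by rw [← pow_add]; congr 1; omega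
    have hsq : s ^ q ≠ 0 := by positivity
    have e1 : L ^ q * s ^ q = 1 := by rw [← mul_pow, hLs, one_pow]
    have e2 : L ^ (q - p) * s ^ (q - p) = 1 := by rw [← mul_pow, hLs, one_pow]
    have e3 : (L ^ (q - p) + 4) * s ^ q = 1 := by
      linear_combination (-(L ^ (q - p))) * h1 + s ^ p * e2 + hr
    exact mul_right_cancel₀ hsq (e1.trans e3.symm)
  have hLr : L = r⁻¹ ^ 2 := by rw [hLdef, hs, ← inv_pow]
  have hLc : ((L : ℝ) : ℂ) = (r : ℂ)⁻¹ ^ 2 := by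
    rw [hLr]; push_cast; ring
  subst hP
  have evalP : ∀ z : ℂ, eval z (X ^ q - X ^ (q - p) - C 4 : ℂ[X]) = z ^ q - z ^ (q - p) - 4 := by
    intro z; simp
  -- part (i)
  have part1 : eval ((r : ℂ)⁻¹ ^ 2) (X ^ q - X ^ (q - p) - C 4 : ℂ[X]) = 0 := by
    rw [← hLc, evalP, ← Complex.ofReal_pow, ← Complex.ofReal_pow, hLe]
    push_cast
    ring
  -- part (iii)
  have part3 : ∀ z : ℂ, eval z (X ^ q - X ^ (q - p) - C 4 : ℂ[X]) = 0 → 1 < ‖z‖ := by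
    intro z hz
    rw [evalP, sub_sub, sub_eq_zero] at hz
    by_contra h
    push_neg at h
    have h1 : ‖z ^ q‖ ≤ 1 := by
      rw [norm_pow]; exact pow_le_one₀ (norm_nonneg z) h
    have h2 : ‖z ^ (q - p)‖ ≤ 1 := by
      rw [norm_pow]; exact pow_le_one₀ (norm_nonneg z) h
    have h3 : (4 : ℝ) ≤ ‖z ^ (q - p)‖ + ‖z ^ q‖ := by
      calc (4 : ℝ) = ‖z ^ q - z ^ (q - p)‖ := by
            rw [show z ^ q - z ^ (q - p) = 4 by rw [hz]; ring]; simp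
        _ ≤ ‖z ^ q‖ + ‖z ^ (q - p)‖ := by
            simpa [sub_eq_add_neg] using norm_add_le (z ^ q) (-(z ^ (q - p)))
        _ = ‖z ^ (q - p)‖ + ‖z ^ q‖ := by ring
    linarith
  -- root equation
  have rootEq : ∀ z : ℂ, eval z (X ^ q - X ^ (q - p) - C 4 : ℂ[X]) = 0 ↔
      z ^ q = z ^ (q - p) + 4 := by
    intro z
    rw [evalP]
    constructor
    · intro h; linear_combination h
    · intro h; linear_combination h
  -- |z| ≤ L for roots
  have hmle : ∀ z : ℂ, z ^ q = z ^ (q - p) + 4 → ‖z‖ ≤ L := by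
    intro z he
    set m := ‖z‖ with hm
    have hm1 : 1 < m := part3 z ((rootEq z).mpr he)
    have hle : m ^ q ≤ m ^ (q - p) + 4 := by
      calc m ^ q = ‖z ^ (q - p) + 4‖ := by rw [← norm_pow, he]
        _ ≤ ‖z ^ (q - p)‖ + ‖(4 : ℂ)‖ := norm_add_le _ _
        _ = m ^ (q - p) + 4 := by rw [norm_pow]; simp [hm]
    by_contra h
    push_neg at h
    have h1 : L ^ (q - p) < m ^ (q - p) := pow_lt_pow_left₀ h hL0.le (by omega)
    have h2 : L ^ p < m ^ p := pow_lt_pow_left₀ h hL0.le (by omega)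
    have h3 : m ^ (q - p) * m ^ p = m ^ q := by rw [← pow_add]; congr 1; omega
    have h4 : L ^ (q - p) * L ^ p = L ^ q := by rw [← pow_add]; congr 1; omega
    nlinarith [pow_pos hL0 (q - p), one_lt_pow₀ hL1 (by omega : p ≠ 0),
      one_lt_pow₀ hm1 (by omega : p ≠ 0), pow_pos (lt_trans one_pos hm1) (q - p)]
  -- equality case
  have hEqCase : ∀ z : ℂ, z ^ q = z ^ (q - p) + 4 → ‖z‖ = L → z = ((L : ℝ) : ℂ) := by
    intro z he hm
    have habs : ‖z ^ (q - p)‖ = L ^ (q - p) := by rw [norm_pow, hm]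
    have h1 : ‖z ^ (q - p) + 4‖ = L ^ q := by rw [← he, norm_pow, hm]
    have key2 : (L ^ (q - p)) ^ 2 = (z ^ (q - p)).re ^ 2 + (z ^ (q - p)).im ^ 2 := by
      rw [← habs, Complex.sq_norm, Complex.normSq_apply]; ring
    have key1 : (L ^ q) ^ 2 = ((z ^ (q - p)).re + 4) ^ 2 + (z ^ (q - p)).im ^ 2 := by
      have hri : (z ^ (q - p) + 4).re = (z ^ (q - p)).re + 4 ∧
          (z ^ (q - p) + 4).im = (z ^ (q - p)).im := by
        constructor <;> simp
      rw [← h1, Complex.sq_norm, Complex.normSq_apply, hri.1, hri.2]; ring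
    have hre : (z ^ (q - p)).re = L ^ (q - p) := by
      linear_combination (key2 - key1) / 8 + (L ^ q + L ^ (q - p) + 4) / 8 * hLe
    have him : (z ^ (q - p)).im = 0 := by
      have h2 : (z ^ (q - p)).im ^ 2 = 0 := by
        linear_combination (-1 : ℝ) * key2 - ((z ^ (q - p)).re + L ^ (q - p)) * hre
      exact sq_eq_zero_iff.mp h2
    have haeq : z ^ (q - p) = ((L ^ (q - p) : ℝ) : ℂ) := by
      apply Complex.ext <;>
        simp only [Complex.ofReal_re, Complex.ofReal_im, hre, him]
    have hzq : z ^ q = ((L ^ q : ℝ) : ℂ) := by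
      rw [he, haeq, hLe]; push_cast; ring
    have hzp : z ^ p = ((L : ℝ) : ℂ) ^ p := by
      have h3 : z ^ (q - p) * z ^ p = z ^ q := by rw [← pow_add]; congr 1; omega
      have h4 : ((L:ℝ):ℂ) ^ (q - p) * ((L:ℝ):ℂ) ^ p = ((L:ℝ):ℂ) ^ q := by
        rw [← pow_add]; congr 1; omega
      have h5 : z ^ (q - p) * z ^ p = ((L:ℝ):ℂ) ^ (q - p) * ((L:ℝ):ℂ) ^ p := by
        rw [h3, h4, hzq]; push_cast; ring
      have hc : z ^ (q - p) = ((L:ℝ):ℂ) ^ (q - p) := by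
        rw [haeq]; push_cast; ring
      rw [hc] at h5
      refine mul_left_cancel₀ ?_ h5
      exact pow_ne_zero _ (Complex.ofReal_ne_zero.mpr hL0.ne')
    -- w = z / L
    have hLne : ((L : ℝ) : ℂ) ≠ 0 := by exact_mod_cast hL0.ne'
    set w : ℂ := z / ((L : ℝ) : ℂ) with hw
    have hwp : w ^ p = 1 := by
      rw [hw, div_pow, hzp, div_self (pow_ne_zero _ hLne)]
    have hwq : w ^ q = 1 := by
      rw [hw, div_pow, hzq]
      push_cast
      rw [div_self (pow_ne_zero _ hLne)]
    have hw1 : w = 1 := by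
      have : w ^ Nat.gcd p q = 1 := pow_gcd_eq_one.mpr ⟨hwp, hwq⟩
      rwa [hco, pow_one] at this
    rw [hw, div_eq_one_iff_eq hLne] at hw1
    exact hw1
  refine ⟨part1, ?_, ?_, part3, ?_⟩
  · -- part (ii)
    intro x hx hroot
    rw [rootEq] at hroot
    have hxr : x ^ q = x ^ (q - p) + 4 := by
      have : ((x ^ q : ℝ) : ℂ) = ((x ^ (q - p) + 4 : ℝ) : ℂ) := by push_cast; exact hroot
      exact_mod_cast this
    have := aux_uniq p q hpq hp x L hx hL0 hxr hLe
    rw [← hLc, this]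
  · -- strict bound
    intro z hz hne
    rw [rootEq] at hz
    have hle := hmle z hz
    rcases lt_or_eq_of_le hle with h | h
    · rwa [hLr] at h
    · exact absurd (by rw [hLc] at *; exact hEqCase z hz h) hne
  · -- simplicity
    intro z hz
    have hPne : (X ^ q - X ^ (q - p) - C 4 : ℂ[X]) ≠ 0 := by
      intro h
      have h0 : eval 0 (X ^ q - X ^ (q - p) - C 4 : ℂ[X]) = -4 := by
        rw [evalP, zero_pow hq.ne', zero_pow hqp.ne']; ring
      rw [h] at h0
      simp at h0
    have hroot : z ^ q = z ^ (q - p) + 4 := (rootEq z).mp hz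
    have habs : 1 < ‖z‖ := part3 z hz
    have hz0 : z ≠ 0 := by
      intro h; rw [h] at habs; norm_num at habs
    -- derivative nonzero at z
    have hder : eval z (derivative (X ^ q - X ^ (q - p) - C 4 : ℂ[X])) ≠ 0 := by
      have hd : derivative (X ^ q - X ^ (q - p) - C 4 : ℂ[X]) =
          C (q : ℂ) * X ^ (q - 1) - C ((q - p : ℕ) : ℂ) * X ^ (q - p - 1) := by
        rw [derivative_sub, derivative_sub, derivative_C, sub_zero,
          derivative_X_pow, derivative_X_pow]
      rw [hd]
      simp only [eval_sub, eval_mul, eval_C, eval_pow, eval_X]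
      intro h
      have hsplit : z ^ (q - 1) = z ^ (q - p - 1) * z ^ p := by
        rw [← pow_add]; congr 1; omega
      rw [hsplit] at h
      have h2 : z ^ (q - p - 1) * ((q : ℂ) * z ^ p - ((q - p : ℕ) : ℂ)) = 0 := by
        linear_combination h
      have h3 : z ^ (q - p - 1) ≠ 0 := pow_ne_zero _ hz0
      have h4 : (q : ℂ) * z ^ p = ((q - p : ℕ) : ℂ) := by
        rcases mul_eq_zero.mp h2 with h' | h'
        · exact absurd h' h3
        · linear_combination h'
      have h5 : (q : ℝ) * ‖z‖ ^ p = ((q - p : ℕ) : ℝ) := by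
        have := congrArg (‖·‖) h4
        rw [norm_mul, norm_pow] at this
        simpa using this
      have h6 : 1 < ‖z‖ ^ p := one_lt_pow₀ habs (by omega : p ≠ 0)
      have h7 : ((q - p : ℕ) : ℝ) < (q : ℝ) := by
        have : q - p < q := by omega
        exact_mod_cast this
      nlinarith [hq]
    -- multiplicity
    have hm1 : 1 ≤ rootMultiplicity z (X ^ q - X ^ (q - p) - C 4 : ℂ[X]) :=
      (rootMultiplicity_pos hPne).mpr hz
    by_contra hcon
    have hm2 : 2 ≤ rootMultiplicity z (X ^ q - X ^ (q - p) - C 4 : ℂ[X]) := by omega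
    have := derivative_rootMultiplicity_of_root hz
    have hdpos : 0 < rootMultiplicity z (derivative (X ^ q - X ^ (q - p) - C 4 : ℂ[X])) := by
      omega
    have hdne : derivative (X ^ q - X ^ (q - p) - C 4 : ℂ[X]) ≠ 0 := by
      intro h
      rw [h, rootMultiplicity_zero] at hdpos
      omega
    exact hder ((rootMultiplicity_pos hdne).mp hdpos)
end

section
/- Let p and q be distinct coprime positive integers, set m = max(p,q), and let M be the m×m complex matrix (rows and columns indexed by 1,…,m) whose (i,j) entry equals 1 if j = i+1, whose (p,1) entry equals 1, whose (q,1) entry equals 4, and whose remaining entries are 0. Let λ ∈ ℂ be any root of the characteristic polynomial of M (which equals λ^q − λ^{q−p} − 4 if p < q and λ^p − 4λ^{p−q} − 1 if p > q). Define ψ ∈ ℂ^m by ψ_k = λ^k − λ^{k−p}·H(k−p−1) − 4·λ^{k−q}·H(k−q−1), where H(j) = 1 if j ≥ 0 and H(j) = 0 otherwise (so the second term is present only when k ≥ p+1 and the third only when k ≥ q+1). Then ψ ≠ 0 and M ψ = λ ψ. -/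
open Polynomial

set_option maxHeartbeats 1000000

theorem stmt_12 (p q : ℕ) (hp : 0 < p) (hq : 0 < q) (hne : p ≠ q)
    (hco : Nat.Coprime p q) (m : ℕ) (hm : m = max p q)
    (M : Matrix (Fin m) (Fin m) ℂ)
    (hM : ∀ i j : Fin m, M i j =
      if (j : ℕ) = (i : ℕ) + 1 then 1
      else if (j : ℕ) = 0 ∧ (i : ℕ) + 1 = p then 1
      else if (j : ℕ) = 0 ∧ (i : ℕ) + 1 = q then 4
      else 0)
    (lam : ℂ) (hlam : M.charpoly.eval lam = 0)
    (ψ : Fin m → ℂ)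
    (hψ : ∀ k : Fin m, ψ k =
      lam ^ ((k : ℕ) + 1)
      - (if p + 1 ≤ (k : ℕ) + 1 then lam ^ ((k : ℕ) + 1 - p) else 0)
      - 4 * (if q + 1 ≤ (k : ℕ) + 1 then lam ^ ((k : ℕ) + 1 - q) else 0)) :
    ψ ≠ 0 ∧ M.mulVec ψ = lam • ψ := by
  have hpm : p ≤ m := hm ▸ le_max_left p q
  have hqm : q ≤ m := hm ▸ le_max_right p q
  have hm0 : 0 < m := by omega
  have hmpq : m = p ∨ m = q := by
    rcases max_choice p q with h | h <;> omega
  set i0 : Fin m := ⟨0, hm0⟩ with hi0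
  set c : ℕ → ℂ := fun n => (if n = p then 1 else 0) + (if n = q then 4 else 0) with hc
  -- the row formula for mulVec
  have key : ∀ (w : Fin m → ℂ) (i : Fin m), M.mulVec w i =
      (if h : (i : ℕ) + 1 < m then w ⟨(i : ℕ) + 1, h⟩ else 0) + c ((i : ℕ) + 1) * w i0 := by
    intro w i
    have hpt : ∀ j : Fin m, M i j * w j =
        (if (j : ℕ) = (i : ℕ) + 1 then w j else 0) +
          (if j = i0 then c ((i : ℕ) + 1) * w j else 0) := by
      intro j
      have hj0 : (j = i0) ↔ ((j : ℕ) = 0) := by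
        simp [Fin.ext_iff, hi0]
      rw [hM]
      by_cases h1 : (j : ℕ) = (i : ℕ) + 1
      · have h2 : ¬ (j : ℕ) = 0 := by omega
        have h3 : ¬ j = i0 := by simp [hj0, h2]
        simp [h1, h2, h3]
      · by_cases h2 : (j : ℕ) = 0
        · have h3 : j = i0 := hj0.2 h2
          by_cases hp' : (i : ℕ) + 1 = p
          · have hq' : ¬((i : ℕ) + 1 = q) := fun hq' => hne (hp'.symm.trans hq')
            simp [h1, h2, h3, hp', hq', hc, hne, Ne.symm hne,
              (by omega : ¬(0 : ℕ) = p), (by omega : ¬(0 : ℕ) = q)] <;>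
              first
              | (intro h0; exact absurd h0 (by omega))
              | (split_ifs <;> first | (exfalso; omega) | ring)
          · by_cases hq' : (i : ℕ) + 1 = q
            · simp [h1, h2, h3, hp', hq', hc, hne, Ne.symm hne,
              (by omega : ¬(0 : ℕ) = p), (by omega : ¬(0 : ℕ) = q)] <;>
              first
              | (intro h0; exact absurd h0 (by omega))
              | (split_ifs <;> first | (exfalso; omega) | ring)
            · simp [h1, h2, h3, hp', hq', hc, hne, Ne.symm hne,
              (by omega : ¬(0 : ℕ) = p), (by omega : ¬(0 : ℕ) = q)] <;>
              first
              | (intro h0; exact absurd h0 (by omega))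
              | (split_ifs <;> first | (exfalso; omega) | ring)
        · have h3 : ¬ j = i0 := by simp [hj0, h2]
          simp [h1, h2, h3]
    have : M.mulVec w i = ∑ j, M i j * w j := rfl
    rw [this, Finset.sum_congr rfl (fun j _ => hpt j), Finset.sum_add_distrib]
    congr 1
    · by_cases h : (i : ℕ) + 1 < m
      · rw [dif_pos h]
        have hiff : ∀ j : Fin m, ((j : ℕ) = (i : ℕ) + 1) ↔ j = ⟨(i : ℕ) + 1, h⟩ := by
          intro j; simp [Fin.ext_iff]
        simp_rw [hiff]
        simp
      · rw [dif_neg h]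
        apply Finset.sum_eq_zero
        intro j _
        rw [if_neg]
        have := j.isLt
        omega
    · simp
  -- basic values of ψ
  have hψ0 : ψ i0 = lam := by
    have h0 : (i0 : ℕ) = 0 := rfl
    rw [hψ, h0, if_neg (by omega), if_neg (by omega)]
    ring
  have hstep : ∀ a : ℕ, 0 < a → ∀ k : ℕ,
      (if a + 1 ≤ k + 1 + 1 then lam ^ (k + 1 + 1 - a) else 0)
        = lam * (if a + 1 ≤ k + 1 then lam ^ (k + 1 - a) else 0)
          + (if k + 1 = a then lam else 0) := by
    intro a ha k
    rcases lt_trichotomy a (k + 1) with h | h | h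
    · rw [if_pos (by omega), if_pos (by omega), if_neg (by omega)]
      have he : k + 1 + 1 - a = (k + 1 - a) + 1 := by omega
      rw [he, pow_succ]
      ring
    · rw [if_pos (by omega), if_neg (by omega), if_pos (by omega)]
      have he : k + 1 + 1 - a = 1 := by omega
      rw [he, pow_one]
      ring
    · rw [if_neg (by omega), if_neg (by omega), if_neg (by omega)]
      ring
  have hψrec : ∀ (k : ℕ) (hk : k + 1 < m),
      ψ ⟨k + 1, hk⟩ = lam * ψ ⟨k, by omega⟩ - c (k + 1) * lam := by
    intro k hk
    rw [hψ, hψ]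
    have h1 : ((⟨k + 1, hk⟩ : Fin m) : ℕ) = k + 1 := rfl
    have h2 : ((⟨k, by omega⟩ : Fin m) : ℕ) = k := rfl
    rw [h1, h2, hstep p hp k, hstep q hq k]
    simp only [hc]
    split_ifs <;> first | ring | (exfalso; omega)
  -- an eigenvector exists
  have hdet : (lam • (1 : Matrix (Fin m) (Fin m) ℂ) - M).det = 0 := by
    have hmap : (Matrix.charmatrix M).map (Polynomial.evalRingHom lam) =
        lam • (1 : Matrix (Fin m) (Fin m) ℂ) - M := by
      ext i j
      by_cases h : i = j <;>
        simp [Matrix.charmatrix_apply, h, Matrix.one_apply, Matrix.diagonal_apply]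
    have h2 := (Polynomial.evalRingHom lam).map_det (Matrix.charmatrix M)
    rw [RingHom.mapMatrix_apply, hmap] at h2
    rw [← h2]
    simpa [Matrix.charpoly] using hlam
  obtain ⟨v, hv0, hveq⟩ := (Matrix.exists_mulVec_eq_zero_iff).2 hdet
  have hveig : M.mulVec v = lam • v := by
    have h1 : (lam • (1 : Matrix (Fin m) (Fin m) ℂ) - M).mulVec v =
        lam • v - M.mulVec v := by
      rw [Matrix.sub_mulVec, Matrix.smul_mulVec, Matrix.one_mulVec]
    rw [h1] at hveq
    linear_combination (norm := module) -hveq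
  have hrowv : ∀ i : Fin m,
      (if h : (i : ℕ) + 1 < m then v ⟨(i : ℕ) + 1, h⟩ else 0) + c ((i : ℕ) + 1) * v i0
        = lam * v i := by
    intro i
    rw [← key v i, hveig]
    simp
  -- v i0 ≠ 0
  have hv00 : v i0 ≠ 0 := by
    intro h0
    apply hv0
    have hall : ∀ k, ∀ hk : k < m, v ⟨k, hk⟩ = 0 := by
      intro k
      induction k with
      | zero => intro hk; exact h0
      | succ k ih =>
        intro hk
        have hk' : k < m := by omega
        have hrow := hrowv ⟨k, hk'⟩
        rw [dif_pos (show ((⟨k, hk'⟩ : Fin m) : ℕ) + 1 < m from hk)] at hrow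
        rw [ih hk', h0] at hrow
        simpa using hrow
    funext i
    have := hall i i.isLt
    simpa using this
  -- v is proportional to ψ
  have hC : ∀ k, ∀ hk : k < m, lam * v ⟨k, hk⟩ = ψ ⟨k, hk⟩ * v i0 := by
    intro k
    induction k with
    | zero =>
      intro hk
      show lam * v i0 = ψ i0 * v i0
      rw [hψ0]
    | succ k ih =>
      intro hk
      have hk' : k < m := by omega
      have hrow := hrowv ⟨k, hk'⟩
      rw [dif_pos (show ((⟨k, hk'⟩ : Fin m) : ℕ) + 1 < m from hk)] at hrow
      have hvk : v ⟨k + 1, hk⟩ = lam * v ⟨k, hk'⟩ - c (k + 1) * v i0 := by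
        linear_combination hrow
      rw [hψrec k hk, hvk, mul_sub, mul_comm lam (lam * v ⟨k, hk'⟩)]
      rw [mul_assoc, mul_comm (v ⟨k, hk'⟩) lam, ih hk']
      ring
  -- the closure relation
  have hrowlast := hrowv ⟨m - 1, by omega⟩
  rw [dif_neg (by simp; omega)] at hrowlast
  have hlast : ((⟨m - 1, by omega⟩ : Fin m) : ℕ) + 1 = m := by simp; omega
  rw [hlast] at hrowlast
  have hcm0 : c m ≠ 0 := by
    rcases hmpq with h | h
    · norm_num [hc, h, hne]
    · norm_num [hc, h, Ne.symm hne]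
  have hclose : ψ ⟨m - 1, by omega⟩ = c m := by
    have h1 : lam * v ⟨m - 1, by omega⟩ = ψ ⟨m - 1, by omega⟩ * v i0 :=
      hC (m - 1) (by omega)
    rw [h1] at hrowlast
    have h2 : (c m - ψ ⟨m - 1, by omega⟩) * v i0 = 0 := by linear_combination hrowlast
    rcases mul_eq_zero.1 h2 with h | h
    · linear_combination -h
    · exact absurd h hv00
  -- lam ≠ 0
  have hlam0 : lam ≠ 0 := by
    intro h
    have h1 : c m * v i0 = 0 := by
      rw [h] at hrowlast
      linear_combination hrowlast
    rcases mul_eq_zero.1 h1 with h2 | h2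
    · exact hcm0 h2
    · exact hv00 h2
  constructor
  · intro h
    apply hlam0
    rw [← hψ0, h]
    rfl
  · funext i
    rw [key ψ i]
    show _ = lam * ψ i
    by_cases h : (i : ℕ) + 1 < m
    · rw [dif_pos h, hψ0]
      have heq : ψ ⟨(i : ℕ) + 1, h⟩ = lam * ψ ⟨(i : ℕ), i.isLt⟩ - c ((i : ℕ) + 1) * lam :=
        hψrec (i : ℕ) h
      rw [heq, Fin.eta]
      ring
    · rw [dif_neg h, hψ0]
      have him : i = ⟨m - 1, by omega⟩ := by
        have := i.isLt
        apply Fin.ext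
        simp
        omega
      rw [him]
      have harg : ((⟨m - 1, by omega⟩ : Fin m) : ℕ) + 1 = m := by
        show m - 1 + 1 = m
        omega
      rw [congrArg c harg, hclose]
      ring
end

section
/- Let p and q be distinct coprime positive integers, set m = max(p,q), and let M be the m×m real matrix (rows and columns indexed by 1,…,m) whose (i,j) entry equals 1 if j = i+1, whose (p,1) entry equals 1, whose (q,1) entry equals 4, and whose remaining entries are 0. Let r be the unique real number in (0,1) satisfying r^{2p} + 4r^{2q} = 1. Then for every k ∈ {1,…,m}, the limit as n → ∞ of r^{2n} · Σ_{i=1}^{m} (Mⁿ)_{i,k} exists and equals 4 r^{2k} / ((1 − r²)(p·r^{2p} + 4q·r^{2q})). -/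
open Finset Filter


noncomputable def pinf (p q : ℕ) : ℕ → ℝ
  | 0 => 1
  | (n+1) =>
    (if 0 < p ∧ p ≤ n+1 then pinf p q (n+1-p) else 1)
      + 4 * (if 0 < q ∧ q ≤ n+1 then pinf p q (n+1-q) else 1)
decreasing_by all_goals omega

lemma pinf_pos (p q n : ℕ) : 0 < pinf p q n := by
  induction n using Nat.strong_induction_on with
  | _ n ih =>
    match n with
    | 0 => simp [pinf]
    | (n+1) =>
      rw [pinf]
      have h1 : (0:ℝ) < if 0 < p ∧ p ≤ n+1 then pinf p q (n+1-p) else 1 := by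
        split
        · exact ih _ (by omega)
        · norm_num
      have h2 : (0:ℝ) < if 0 < q ∧ q ≤ n+1 then pinf p q (n+1-q) else 1 := by
        split
        · exact ih _ (by omega)
        · norm_num
      nlinarith

noncomputable def Gg (p q : ℕ) (ρ : ℝ) (n : ℤ) : ℝ :=
  ρ ^ n * (if 0 ≤ n then pinf p q n.toNat else 1)


lemma rep_lemma {p q : ℕ} (hp : 0 < p) (hq : 0 < q) (hco : Nat.Coprime p q)
    {t : ℕ} (ht : p*q ≤ t) : ∃ i j : ℕ, i*p + j*q = t := by
  rcases Nat.lt_or_ge p 2 with hp2 | hp1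
  · have hp1 : p = 1 := by omega
    subst hp1; exact ⟨t, 0, by omega⟩
  rcases Nat.lt_or_ge q 2 with hq2 | hq1
  · have hq1 : q = 1 := by omega
    subst hq1; exact ⟨0, t, by omega⟩
  replace hp1 : 1 < p := hp1
  replace hq1 : 1 < q := hq1
  have hF := frobeniusNumber_pair hco hp1 hq1
  have hmn : p + q ≤ p * q := Nat.add_le_mul hp1 hq1
  have hmem : t ∈ AddSubmonoid.closure ({p, q} : Set ℕ) := by
    by_contra hcon
    have := hF.2 (by simpa using hcon)
    omega
  rw [AddSubmonoid.mem_closure_pair] at hmem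
  obtain ⟨a, b, hab⟩ := hmem
  exact ⟨a, b, by simpa [smul_eq_mul] using hab⟩

section
variable (p q : ℕ) (ρ : ℝ) (hp : 0 < p) (hq : 0 < q) (hρ0 : 0 < ρ) (hρ1 : ρ < 1)
  (hsum : ρ^p + 4*ρ^q = 1) (hco : Nat.Coprime p q)

lemma Gg_nonpos {n : ℤ} (hn : n ≤ 0) : Gg p q ρ n = ρ ^ n := by
  rcases eq_or_lt_of_le hn with h | h
  · simp [Gg, h, pinf]
  · simp [Gg, not_le.2 h]

lemma Gg_nat (n : ℕ) : Gg p q ρ n = ρ ^ n * pinf p q n := by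
  simp [Gg, zpow_natCast]

include hp hq hρ0 in
lemma Gg_rec {n : ℤ} (hn : 1 ≤ n) :
    Gg p q ρ n = ρ ^ p * Gg p q ρ (n - p) + 4 * ρ ^ q * Gg p q ρ (n - q) := by
  have hρne : ρ ≠ 0 := ne_of_gt hρ0
  obtain ⟨N, rfl⟩ : ∃ N : ℕ, n = (N : ℤ) + 1 := by
    refine ⟨(n - 1).toNat, by omega⟩
  have key : ∀ t : ℕ, 0 < t →
      ρ ^ t * Gg p q ρ ((N:ℤ) + 1 - t)
        = ρ ^ (N+1) * (if 0 < t ∧ t ≤ N + 1 then pinf p q (N+1-t) else 1) := by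
    intro t ht
    have hz : ρ ^ ((N:ℤ) + 1 - t) * ρ ^ (t:ℤ) = ρ ^ (N+1) := by
      rw [← zpow_add₀ hρne]
      have : (N:ℤ) + 1 - t + t = ((N+1 : ℕ) : ℤ) := by push_cast; ring
      rw [this, zpow_natCast]
    by_cases hle : t ≤ N + 1
    · have h0 : (0:ℤ) ≤ (N:ℤ) + 1 - t := by omega
      have htn : ((N:ℤ) + 1 - t).toNat = N + 1 - t := by omega
      rw [Gg, if_pos h0, htn, if_pos ⟨ht, hle⟩, ← zpow_natCast ρ t]
      rw [show ρ ^ (t:ℤ) * (ρ ^ ((N:ℤ)+1-(t:ℤ)) * pinf p q (N+1-t))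
            = (ρ ^ ((N:ℤ) + 1 - t) * ρ ^ (t:ℤ)) * pinf p q (N+1-t) by ring, hz]
    · have h0 : (N:ℤ) + 1 - t ≤ 0 := by omega
      rw [Gg_nonpos p q ρ h0, if_neg (by omega), ← zpow_natCast ρ t, mul_comm, hz,
        mul_one]
  have kp := key p hp
  have kq := key q hq
  have hGN : Gg p q ρ ((N:ℤ)+1) = ρ^(N+1) * pinf p q (N+1) := by
    rw [Gg, if_pos (by omega : (0:ℤ) ≤ (N:ℤ)+1),
      show ((N:ℤ)+1).toNat = N+1 by omega,
      show ((N:ℤ)+1) = ((N+1:ℕ):ℤ) by push_cast; ring, zpow_natCast]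
  rw [hGN, pinf]
  linear_combination (-1 : ℝ) * kp - 4 * kq

include hρ0 in
lemma Gg_pos (n : ℤ) : 0 < Gg p q ρ n := by
  have h : (0:ℝ) < if 0 ≤ n then pinf p q n.toNat else 1 := by
    split
    · exact pinf_pos p q _
    · norm_num
  exact mul_pos (zpow_pos hρ0 n) h

noncomputable def Vv (n : ℤ) : ℝ :=
  ρ^p * ∑ j ∈ Finset.range p, Gg p q ρ (n - j)
    + 4*ρ^q * ∑ j ∈ Finset.range q, Gg p q ρ (n - j)

lemma telescope (t : ℕ) (n : ℤ) :
    ∑ j ∈ Finset.range t, Gg p q ρ (n - j) + Gg p q ρ (n - t)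
      = Gg p q ρ n + ∑ j ∈ Finset.range t, Gg p q ρ (n - 1 - j) := by
  have h1 := Finset.sum_range_succ (fun j : ℕ => Gg p q ρ (n - j)) t
  have h2 := Finset.sum_range_succ' (fun j : ℕ => Gg p q ρ (n - j)) t
  rw [h1] at h2
  rw [h2]
  have : ∀ j : ℕ, n - (↑(j+1) : ℤ) = n - 1 - j := by intro j; push_cast; ring
  rw [Finset.sum_congr rfl fun j _ => by rw [this j]]
  simp [add_comm]

include hp hq hρ0 hsum in
lemma V_const {n : ℤ} (hn : 1 ≤ n) : Vv p q ρ n = Vv p q ρ (n - 1) := by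
  have tp := telescope p q ρ p n
  have tq := telescope p q ρ q n
  have hrec := Gg_rec p q ρ hp hq hρ0 (n := n) hn
  simp only [Vv]
  linear_combination ρ^p * tp + 4*ρ^q * tq + hrec + Gg p q ρ n * hsum
include hp hq hρ0 hsum in
lemma V_nat (N : ℕ) : Vv p q ρ N = Vv p q ρ 0 := by
  induction N with
  | zero => norm_num
  | succ n ih =>
    have h1 : ((n+1 : ℕ) : ℤ) - 1 = (n : ℤ) := by push_cast; ring
    have := V_const p q ρ hp hq hρ0 hsum (n := ((n+1:ℕ) : ℤ))
      (by exact_mod_cast Nat.succ_le_succ (Nat.zero_le n))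
    rw [this, h1, ih]

include hρ0 hρ1 hsum in
lemma V_zero : Vv p q ρ 0 = 4*ρ/(1-ρ) := by
  have hρne : ρ ≠ 0 := ne_of_gt hρ0
  have h2 : (1:ℝ) - ρ ≠ 0 := sub_ne_zero.2 (ne_of_gt (by linarith))
  have hinv1 : (1:ℝ) < ρ⁻¹ := (one_lt_inv₀ hρ0).2 hρ1
  have h1 : ρ⁻¹ - 1 ≠ 0 := sub_ne_zero.2 (ne_of_gt hinv1)
  have hs : ∀ t : ℕ, ∑ j ∈ Finset.range t, Gg p q ρ (0 - j)
      = ((ρ⁻¹)^t - 1)/(ρ⁻¹ - 1) := by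
    intro t
    rw [← geom_sum_eq (ne_of_gt hinv1)]
    refine Finset.sum_congr rfl fun j _ => ?_
    rw [Gg_nonpos p q ρ (by omega), show (0:ℤ) - j = -(j:ℤ) by ring, zpow_neg,
      zpow_natCast, inv_pow]
  have key : ∀ t : ℕ, ρ^t * (((ρ⁻¹)^t - 1)/(ρ⁻¹-1)) = ρ*(1-ρ^t)/(1-ρ) := by
    intro t
    have hpq : ρ^t * (ρ⁻¹)^t = 1 := by
      rw [← mul_pow, mul_inv_cancel₀ hρne, one_pow]
    field_simp
    ring_nf
    linear_combination hpq
  simp only [Vv, hs]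
  rw [show 4*ρ^q * (((ρ⁻¹)^q - 1)/(ρ⁻¹-1)) = 4*(ρ^q * (((ρ⁻¹)^q - 1)/(ρ⁻¹-1))) by ring,
    key p, key q]
  field_simp
  linear_combination (-1) * hsum



set_option maxHeartbeats 2000000 in
include hp hq hρ0 hρ1 hsum hco in
lemma main_conv : Filter.Tendsto (fun n : ℕ => Gg p q ρ n) Filter.atTop
    (nhds ((4*ρ/(1-ρ)) / ((p:ℝ)*ρ^p + 4*(q:ℝ)*ρ^q))) := by
  have hρne : ρ ≠ 0 := ne_of_gt hρ0
  have hap : (0:ℝ) < ρ^p := pow_pos hρ0 p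
  have haq : (0:ℝ) < ρ^q := pow_pos hρ0 q
  have hap1 : ρ^p ≤ 1 := pow_le_one₀ hρ0.le hρ1.le
  have haq1 : ρ^q ≤ 1 := pow_le_one₀ hρ0.le hρ1.le
  set c : ℝ := 4*ρ/(1-ρ) with hc_def
  set μ : ℝ := (p:ℝ)*ρ^p + 4*(q:ℝ)*ρ^q with hμ_def
  have hppos : (0:ℝ) < (p:ℝ) := by exact_mod_cast hp
  have hqpos : (0:ℝ) < (q:ℝ) := by exact_mod_cast hq
  have hμpos : 0 < μ := by
    have h1 := mul_pos hppos hap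
    have h2 := mul_pos hqpos haq
    rw [hμ_def]; nlinarith
  have hVn : ∀ N : ℕ, ρ^p * ∑ j ∈ Finset.range p, Gg p q ρ ((N:ℤ) - j)
      + 4*ρ^q * ∑ j ∈ Finset.range q, Gg p q ρ ((N:ℤ) - j) = c := by
    intro N
    have h1 : Vv p q ρ N = c := by
      rw [V_nat p q ρ hp hq hρ0 hsum N, V_zero p q ρ hρ0 hρ1 hsum]
    simpa [Vv] using h1
  have hGpos : ∀ z : ℤ, 0 < Gg p q ρ z := Gg_pos p q ρ hρ0
  have hGb : ∀ z : ℤ, 0 ≤ z → Gg p q ρ z ≤ c/ρ^p := by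
    intro z hz
    obtain ⟨N, rfl⟩ : ∃ N : ℕ, z = (N:ℤ) := ⟨z.toNat, (Int.toNat_of_nonneg hz).symm⟩
    have h1 := hVn N
    have h2 : Gg p q ρ ((N:ℤ) - ((0:ℕ):ℤ)) ≤ ∑ j ∈ Finset.range p, Gg p q ρ ((N:ℤ) - j) :=
      Finset.single_le_sum (f := fun j : ℕ => Gg p q ρ ((N:ℤ) - j))
        (fun j _ => (hGpos _).le) (Finset.mem_range.2 hp)
    have h3 : (0:ℝ) ≤ ∑ j ∈ Finset.range q, Gg p q ρ ((N:ℤ) - j) :=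
      Finset.sum_nonneg fun j _ => (hGpos _).le
    rw [le_div_iff₀ hap]
    norm_num at h2
    nlinarith [hGpos ((N:ℤ))]
  set g : ℕ → ℝ := fun n => Gg p q ρ (n:ℤ) with hg_def
  have hb_le : Filter.IsBoundedUnder (· ≤ ·) Filter.atTop g :=
    Filter.isBoundedUnder_of ⟨c/ρ^p, fun n => hGb n (Int.ofNat_nonneg n)⟩
  have hb_ge : Filter.IsBoundedUnder (· ≥ ·) Filter.atTop g :=
    Filter.isBoundedUnder_of ⟨0, fun n => (hGpos n).le⟩
  set L : ℝ := Filter.limsup g Filter.atTop with hL_def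
  set l : ℝ := Filter.liminf g Filter.atTop with hl_def
  have hzg : ∀ z : ℤ, 0 ≤ z → g z.toNat = Gg p q ρ z := by
    intro z hz; simp only [hg_def, Int.toNat_of_nonneg hz]
  have up : ∀ δ : ℝ, 0 < δ → ∃ N : ℕ, ∀ z : ℤ, (N:ℤ) ≤ z → Gg p q ρ z < L + δ := by
    intro δ hδ
    have h := Filter.eventually_lt_of_limsup_lt (show L < L + δ by linarith) hb_le
    obtain ⟨N, hN⟩ := Filter.eventually_atTop.1 h
    refine ⟨N, fun z hz => ?_⟩
    have h0 : (0:ℤ) ≤ z := le_trans (Int.ofNat_nonneg N) hz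
    have := hN z.toNat (by omega)
    rwa [hzg z h0] at this
  have low : ∀ δ : ℝ, 0 < δ → ∃ N : ℕ, ∀ z : ℤ, (N:ℤ) ≤ z → l - δ < Gg p q ρ z := by
    intro δ hδ
    have h := Filter.eventually_lt_of_lt_liminf (show l - δ < l by linarith) hb_ge
    obtain ⟨N, hN⟩ := Filter.eventually_atTop.1 h
    refine ⟨N, fun z hz => ?_⟩
    have h0 : (0:ℤ) ≤ z := le_trans (Int.ofNat_nonneg N) hz
    have := hN z.toNat (by omega)
    rwa [hzg z h0] at this
  -- step lemmas for limsup propagation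
  have stepLp : ∀ (s : ℕ),
      (∃ K : ℝ, 1 ≤ K ∧ ∀ δ : ℝ, 0 < δ → ∃ N : ℕ, ∀ z : ℤ, (N:ℤ) ≤ z →
        L - δ < Gg p q ρ z → L - K*δ < Gg p q ρ (z - ((s : ℕ) : ℤ))) →
      (∃ K : ℝ, 1 ≤ K ∧ ∀ δ : ℝ, 0 < δ → ∃ N : ℕ, ∀ z : ℤ, (N:ℤ) ≤ z →
        L - δ < Gg p q ρ z → L - K*δ < Gg p q ρ (z - ((s + p : ℕ) : ℤ))) := by
    rintro s ⟨K, hK1, hKs⟩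
    have hKpos : (0:ℝ) < K := lt_of_lt_of_le one_pos hK1
    refine ⟨(1+4*ρ^q)*K/ρ^p, ?_, ?_⟩
    · rw [le_div_iff₀ hap]; nlinarith [hK1, haq, hap1, hKpos]
    intro δ hδ
    obtain ⟨N₁, hN₁⟩ := hKs δ hδ
    obtain ⟨N₂, hN₂⟩ := up (K*δ) (mul_pos hKpos hδ)
    refine ⟨N₁ + N₂ + s + p + q + 1, fun z hz hgz => ?_⟩
    have hz' : (N₁:ℤ) ≤ z ∧ (N₂:ℤ) ≤ z - s - q ∧ 1 ≤ z - s := by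
      push_cast at hz ⊢; omega
    have h1 : L - K*δ < Gg p q ρ (z - s) := hN₁ z hz'.1 hgz
    have hrec := Gg_rec p q ρ hp hq hρ0 (n := z - s) hz'.2.2
    have h2 : Gg p q ρ (z - s - q) < L + K*δ := hN₂ _ hz'.2.1
    have hzz : z - ((s+p : ℕ):ℤ) = z - s - p := by push_cast; ring
    rw [hzz]
    have hsL : ρ^p * L + 4*ρ^q * L = L := by linear_combination L * hsum
    have hprod : 4*ρ^q * Gg p q ρ (z - s - q) < 4*ρ^q * (L + K*δ) := by
      have := mul_lt_mul_of_pos_left h2 (show (0:ℝ) < 4*ρ^q by positivity)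
      linarith
    have key : ρ^p * L - (1+4*ρ^q)*K*δ < ρ^p * Gg p q ρ (z - s - p) := by linarith
    have hc2 : ρ^p * ((1+4*ρ^q)*K/ρ^p*δ) = (1+4*ρ^q)*K*δ := by field_simp
    have h10 : ρ^p * (L - (1+4*ρ^q)*K/ρ^p*δ) < ρ^p * Gg p q ρ (z - s - p) := by
      rw [mul_sub, hc2]; linarith
    exact (mul_lt_mul_iff_right₀ hap).1 h10
  have stepLq : ∀ (s : ℕ),
      (∃ K : ℝ, 1 ≤ K ∧ ∀ δ : ℝ, 0 < δ → ∃ N : ℕ, ∀ z : ℤ, (N:ℤ) ≤ z →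
        L - δ < Gg p q ρ z → L - K*δ < Gg p q ρ (z - ((s : ℕ) : ℤ))) →
      (∃ K : ℝ, 1 ≤ K ∧ ∀ δ : ℝ, 0 < δ → ∃ N : ℕ, ∀ z : ℤ, (N:ℤ) ≤ z →
        L - δ < Gg p q ρ z → L - K*δ < Gg p q ρ (z - ((s + q : ℕ) : ℤ))) := by
    rintro s ⟨K, hK1, hKs⟩
    have hKpos : (0:ℝ) < K := lt_of_lt_of_le one_pos hK1
    refine ⟨(1+ρ^p)*K/(4*ρ^q), ?_, ?_⟩
    · rw [le_div_iff₀ (by positivity : (0:ℝ) < 4*ρ^q)]; nlinarith [hK1, hap, haq1, hKpos, hsum]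
    intro δ hδ
    obtain ⟨N₁, hN₁⟩ := hKs δ hδ
    obtain ⟨N₂, hN₂⟩ := up (K*δ) (mul_pos hKpos hδ)
    refine ⟨N₁ + N₂ + s + p + q + 1, fun z hz hgz => ?_⟩
    have hz' : (N₁:ℤ) ≤ z ∧ (N₂:ℤ) ≤ z - s - p ∧ 1 ≤ z - s := by
      push_cast at hz ⊢; omega
    have h1 : L - K*δ < Gg p q ρ (z - s) := hN₁ z hz'.1 hgz
    have hrec := Gg_rec p q ρ hp hq hρ0 (n := z - s) hz'.2.2
    have h2 : Gg p q ρ (z - s - p) < L + K*δ := hN₂ _ hz'.2.1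
    have hzz : z - ((s+q : ℕ):ℤ) = z - s - q := by push_cast; ring
    rw [hzz]
    have hsL : ρ^p * L + 4*ρ^q * L = L := by linear_combination L * hsum
    have hprod : ρ^p * Gg p q ρ (z - s - p) < ρ^p * (L + K*δ) := by
      have := mul_lt_mul_of_pos_left h2 hap
      linarith
    have key : 4*ρ^q * L - (1+ρ^p)*K*δ < 4*ρ^q * Gg p q ρ (z - s - q) := by linarith
    have hc2 : (4*ρ^q) * ((1+ρ^p)*K/(4*ρ^q)*δ) = (1+ρ^p)*K*δ := by field_simp
    have h10 : (4*ρ^q) * (L - (1+ρ^p)*K/(4*ρ^q)*δ) < (4*ρ^q) * Gg p q ρ (z - s - q) := by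
      rw [mul_sub, hc2]; linarith
    exact (mul_lt_mul_iff_right₀ (show (0:ℝ) < 4*ρ^q by positivity)).1 h10
  have goodT : ∀ t : ℕ, p*q ≤ t →
      ∃ K : ℝ, 1 ≤ K ∧ ∀ δ : ℝ, 0 < δ → ∃ N : ℕ, ∀ z : ℤ, (N:ℤ) ≤ z →
        L - δ < Gg p q ρ z → L - K*δ < Gg p q ρ (z - ((t : ℕ) : ℤ)) := by
    have colq : ∀ j : ℕ, ∃ K : ℝ, 1 ≤ K ∧ ∀ δ : ℝ, 0 < δ → ∃ N : ℕ, ∀ z : ℤ, (N:ℤ) ≤ z →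
        L - δ < Gg p q ρ z → L - K*δ < Gg p q ρ (z - ((j*q : ℕ) : ℤ)) := by
      intro j
      induction j with
      | zero =>
        refine ⟨1, le_refl 1, fun δ hδ => ⟨0, fun z _ h => ?_⟩⟩
        simpa using h
      | succ j ih =>
        have h2 : (j+1)*q = (j*q) + q := by ring
        rw [h2]
        exact stepLq (j*q) ih
    have main : ∀ i j : ℕ, ∃ K : ℝ, 1 ≤ K ∧ ∀ δ : ℝ, 0 < δ → ∃ N : ℕ, ∀ z : ℤ, (N:ℤ) ≤ z →
        L - δ < Gg p q ρ z → L - K*δ < Gg p q ρ (z - ((i*p + j*q : ℕ) : ℤ)) := by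
      intro i j
      induction i with
      | zero => simpa using colq j
      | succ i ih =>
        have h2 : (i+1)*p + j*q = (i*p + j*q) + p := by ring
        rw [h2]
        exact stepLp (i*p + j*q) ih
    intro t ht
    obtain ⟨i, j, rfl⟩ := rep_lemma hp hq hco ht
    exact main i j
  -- step lemmas for liminf propagation
  have steplp : ∀ (s : ℕ),
      (∃ K : ℝ, 1 ≤ K ∧ ∀ δ : ℝ, 0 < δ → ∃ N : ℕ, ∀ z : ℤ, (N:ℤ) ≤ z →
        Gg p q ρ z < l + δ → Gg p q ρ (z - ((s : ℕ) : ℤ)) < l + K*δ) →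
      (∃ K : ℝ, 1 ≤ K ∧ ∀ δ : ℝ, 0 < δ → ∃ N : ℕ, ∀ z : ℤ, (N:ℤ) ≤ z →
        Gg p q ρ z < l + δ → Gg p q ρ (z - ((s + p : ℕ) : ℤ)) < l + K*δ) := by
    rintro s ⟨K, hK1, hKs⟩
    have hKpos : (0:ℝ) < K := lt_of_lt_of_le one_pos hK1
    refine ⟨(1+4*ρ^q)*K/ρ^p, ?_, ?_⟩
    · rw [le_div_iff₀ hap]; nlinarith [hK1, haq, hap1, hKpos]
    intro δ hδ
    obtain ⟨N₁, hN₁⟩ := hKs δ hδ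
    obtain ⟨N₂, hN₂⟩ := low (K*δ) (mul_pos hKpos hδ)
    refine ⟨N₁ + N₂ + s + p + q + 1, fun z hz hgz => ?_⟩
    have hz' : (N₁:ℤ) ≤ z ∧ (N₂:ℤ) ≤ z - s - q ∧ 1 ≤ z - s := by
      push_cast at hz ⊢; omega
    have h1 : Gg p q ρ (z - s) < l + K*δ := hN₁ z hz'.1 hgz
    have hrec := Gg_rec p q ρ hp hq hρ0 (n := z - s) hz'.2.2
    have h2 : l - K*δ < Gg p q ρ (z - s - q) := hN₂ _ hz'.2.1
    have hzz : z - ((s+p : ℕ):ℤ) = z - s - p := by push_cast; ring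
    rw [hzz]
    have hsL : ρ^p * l + 4*ρ^q * l = l := by linear_combination l * hsum
    have hprod : 4*ρ^q * (l - K*δ) < 4*ρ^q * Gg p q ρ (z - s - q) := by
      have := mul_lt_mul_of_pos_left h2 (show (0:ℝ) < 4*ρ^q by positivity)
      linarith
    have key : ρ^p * Gg p q ρ (z - s - p) < ρ^p * l + (1+4*ρ^q)*K*δ := by linarith
    have hc2 : ρ^p * ((1+4*ρ^q)*K/ρ^p*δ) = (1+4*ρ^q)*K*δ := by field_simp
    have h10 : ρ^p * Gg p q ρ (z - s - p) < ρ^p * (l + (1+4*ρ^q)*K/ρ^p*δ) := by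
      rw [mul_add, hc2]; linarith
    exact (mul_lt_mul_iff_right₀ hap).1 h10
  have steplq : ∀ (s : ℕ),
      (∃ K : ℝ, 1 ≤ K ∧ ∀ δ : ℝ, 0 < δ → ∃ N : ℕ, ∀ z : ℤ, (N:ℤ) ≤ z →
        Gg p q ρ z < l + δ → Gg p q ρ (z - ((s : ℕ) : ℤ)) < l + K*δ) →
      (∃ K : ℝ, 1 ≤ K ∧ ∀ δ : ℝ, 0 < δ → ∃ N : ℕ, ∀ z : ℤ, (N:ℤ) ≤ z →
        Gg p q ρ z < l + δ → Gg p q ρ (z - ((s + q : ℕ) : ℤ)) < l + K*δ) := by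
    rintro s ⟨K, hK1, hKs⟩
    have hKpos : (0:ℝ) < K := lt_of_lt_of_le one_pos hK1
    refine ⟨(1+ρ^p)*K/(4*ρ^q), ?_, ?_⟩
    · rw [le_div_iff₀ (by positivity : (0:ℝ) < 4*ρ^q)]; nlinarith [hK1, hap, haq1, hKpos, hsum]
    intro δ hδ
    obtain ⟨N₁, hN₁⟩ := hKs δ hδ
    obtain ⟨N₂, hN₂⟩ := low (K*δ) (mul_pos hKpos hδ)
    refine ⟨N₁ + N₂ + s + p + q + 1, fun z hz hgz => ?_⟩
    have hz' : (N₁:ℤ) ≤ z ∧ (N₂:ℤ) ≤ z - s - p ∧ 1 ≤ z - s := by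
      push_cast at hz ⊢; omega
    have h1 : Gg p q ρ (z - s) < l + K*δ := hN₁ z hz'.1 hgz
    have hrec := Gg_rec p q ρ hp hq hρ0 (n := z - s) hz'.2.2
    have h2 : l - K*δ < Gg p q ρ (z - s - p) := hN₂ _ hz'.2.1
    have hzz : z - ((s+q : ℕ):ℤ) = z - s - q := by push_cast; ring
    rw [hzz]
    have hsL : ρ^p * l + 4*ρ^q * l = l := by linear_combination l * hsum
    have hprod : ρ^p * (l - K*δ) < ρ^p * Gg p q ρ (z - s - p) := by
      have := mul_lt_mul_of_pos_left h2 hap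
      linarith
    have key : 4*ρ^q * Gg p q ρ (z - s - q) < 4*ρ^q * l + (1+ρ^p)*K*δ := by linarith
    have hc2 : (4*ρ^q) * ((1+ρ^p)*K/(4*ρ^q)*δ) = (1+ρ^p)*K*δ := by field_simp
    have h10 : (4*ρ^q) * Gg p q ρ (z - s - q) < (4*ρ^q) * (l + (1+ρ^p)*K/(4*ρ^q)*δ) := by
      rw [mul_add, hc2]; linarith
    exact (mul_lt_mul_iff_right₀ (show (0:ℝ) < 4*ρ^q by positivity)).1 h10
  have goodTl : ∀ t : ℕ, p*q ≤ t →
      ∃ K : ℝ, 1 ≤ K ∧ ∀ δ : ℝ, 0 < δ → ∃ N : ℕ, ∀ z : ℤ, (N:ℤ) ≤ z →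
        Gg p q ρ z < l + δ → Gg p q ρ (z - ((t : ℕ) : ℤ)) < l + K*δ := by
    have colq : ∀ j : ℕ, ∃ K : ℝ, 1 ≤ K ∧ ∀ δ : ℝ, 0 < δ → ∃ N : ℕ, ∀ z : ℤ, (N:ℤ) ≤ z →
        Gg p q ρ z < l + δ → Gg p q ρ (z - ((j*q : ℕ) : ℤ)) < l + K*δ := by
      intro j
      induction j with
      | zero =>
        refine ⟨1, le_refl 1, fun δ hδ => ⟨0, fun z _ h => ?_⟩⟩
        simpa using h
      | succ j ih =>
        have h2 : (j+1)*q = (j*q) + q := by ring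
        rw [h2]
        exact steplq (j*q) ih
    have main : ∀ i j : ℕ, ∃ K : ℝ, 1 ≤ K ∧ ∀ δ : ℝ, 0 < δ → ∃ N : ℕ, ∀ z : ℤ, (N:ℤ) ≤ z →
        Gg p q ρ z < l + δ → Gg p q ρ (z - ((i*p + j*q : ℕ) : ℤ)) < l + K*δ := by
      intro i j
      induction i with
      | zero => simpa using colq j
      | succ i ih =>
        have h2 : (i+1)*p + j*q = (i*p + j*q) + p := by ring
        rw [h2]
        exact steplp (i*p + j*q) ih
    intro t ht
    obtain ⟨i, j, rfl⟩ := rep_lemma hp hq hco ht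
    exact main i j
  -- the four inequalities
  have hA : c ≤ μ * L := by
    have hstep : ∀ δ : ℝ, 0 < δ → c ≤ μ * (L + δ) := by
      intro δ hδ
      obtain ⟨N, hN⟩ := up δ hδ
      have hVc := hVn (N + p + q)
      have hbp : ∑ j ∈ Finset.range p, Gg p q ρ (((N+p+q : ℕ):ℤ) - j) ≤ p * (L + δ) := by
        have hterm : ∀ j ∈ Finset.range p, Gg p q ρ (((N+p+q:ℕ):ℤ) - j) ≤ L + δ := by
          intro j hj
          have hj' := Finset.mem_range.1 hj
          exact (hN _ (by push_cast; omega)).le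
        calc ∑ j ∈ Finset.range p, Gg p q ρ (((N+p+q:ℕ):ℤ) - j)
            ≤ ∑ _j ∈ Finset.range p, (L + δ) := Finset.sum_le_sum hterm
          _ = p * (L + δ) := by
              rw [Finset.sum_const, Finset.card_range, nsmul_eq_mul]
      have hbq : ∑ j ∈ Finset.range q, Gg p q ρ (((N+p+q : ℕ):ℤ) - j) ≤ q * (L + δ) := by
        have hterm : ∀ j ∈ Finset.range q, Gg p q ρ (((N+p+q:ℕ):ℤ) - j) ≤ L + δ := by
          intro j hj
          have hj' := Finset.mem_range.1 hj
          exact (hN _ (by push_cast; omega)).le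
        calc ∑ j ∈ Finset.range q, Gg p q ρ (((N+p+q:ℕ):ℤ) - j)
            ≤ ∑ _j ∈ Finset.range q, (L + δ) := Finset.sum_le_sum hterm
          _ = q * (L + δ) := by
              rw [Finset.sum_const, Finset.card_range, nsmul_eq_mul]
      rw [hμ_def]
      nlinarith [hap, haq, hbp, hbq, hVc]
    by_contra hcon
    push_neg at hcon
    have hδ : 0 < (c - μ*L)/(2*μ) := div_pos (by linarith) (by linarith)
    have h8 := hstep _ hδ
    have h9 : μ * ((c - μ*L)/(2*μ)) = (c - μ*L)/2 := by field_simp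
    nlinarith
  have hC : μ * l ≤ c := by
    have hstep : ∀ δ : ℝ, 0 < δ → μ * (l - δ) ≤ c := by
      intro δ hδ
      obtain ⟨N, hN⟩ := low δ hδ
      have hVc := hVn (N + p + q)
      have hbp : (p:ℝ) * (l - δ) ≤ ∑ j ∈ Finset.range p, Gg p q ρ (((N+p+q : ℕ):ℤ) - j) := by
        have hterm : ∀ j ∈ Finset.range p, l - δ ≤ Gg p q ρ (((N+p+q:ℕ):ℤ) - j) := by
          intro j hj
          have hj' := Finset.mem_range.1 hj
          exact (hN _ (by push_cast; omega)).le
        calc (p:ℝ) * (l - δ) = ∑ _j ∈ Finset.range p, (l - δ) := by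
              rw [Finset.sum_const, Finset.card_range, nsmul_eq_mul]
          _ ≤ ∑ j ∈ Finset.range p, Gg p q ρ (((N+p+q:ℕ):ℤ) - j) := Finset.sum_le_sum hterm
      have hbq : (q:ℝ) * (l - δ) ≤ ∑ j ∈ Finset.range q, Gg p q ρ (((N+p+q : ℕ):ℤ) - j) := by
        have hterm : ∀ j ∈ Finset.range q, l - δ ≤ Gg p q ρ (((N+p+q:ℕ):ℤ) - j) := by
          intro j hj
          have hj' := Finset.mem_range.1 hj
          exact (hN _ (by push_cast; omega)).le
        calc (q:ℝ) * (l - δ) = ∑ _j ∈ Finset.range q, (l - δ) := by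
              rw [Finset.sum_const, Finset.card_range, nsmul_eq_mul]
          _ ≤ ∑ j ∈ Finset.range q, Gg p q ρ (((N+p+q:ℕ):ℤ) - j) := Finset.sum_le_sum hterm
      rw [hμ_def]
      nlinarith [hap, haq, hbp, hbq, hVc]
    by_contra hcon
    push_neg at hcon
    have hδ : 0 < (μ*l - c)/(2*μ) := div_pos (by linarith) (by linarith)
    have h8 := hstep _ hδ
    have h9 : μ * ((μ*l - c)/(2*μ)) = (μ*l - c)/2 := by field_simp
    nlinarith
  have hB : μ * L ≤ c := by
    have hstep : ∀ ε : ℝ, 0 < ε → μ * (L - ε) ≤ c := by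
      intro ε hε
      choose K hK1 hKs using fun j : ℕ => goodT (p*q + j) (Nat.le_add_right _ _)
      set w : ℕ := p + q with hw
      set Km : ℝ := ∑ j ∈ Finset.range w, K j with hKm
      have hKnn : ∀ j : ℕ, (0:ℝ) ≤ K j := fun j => le_trans zero_le_one (hK1 j)
      have hKle : ∀ j ∈ Finset.range w, K j ≤ Km :=
        fun j hj => Finset.single_le_sum (f := K) (fun j _ => hKnn j) hj
      have hKmpos : 0 < Km := lt_of_lt_of_le one_pos
        (le_trans (hK1 0) (hKle 0 (Finset.mem_range.2 (by omega))))
      set δ : ℝ := ε / Km with hδdef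
      have hδ : 0 < δ := div_pos hε hKmpos
      choose Nf hNf using fun j : ℕ => hKs j δ hδ
      have freqL : ∃ᶠ n : ℕ in Filter.atTop, L - δ < g n :=
        Filter.frequently_lt_of_lt_limsup (hb_ge.isCoboundedUnder_le) (by linarith)
      obtain ⟨n, hn_ge, hn_lt⟩ :=
        (Filter.frequently_atTop.1 freqL) (p*q + w + ∑ j ∈ Finset.range w, Nf j)
      have hwin : ∀ j : ℕ, j < w → L - ε < Gg p q ρ ((n:ℤ) - ((p*q + j : ℕ):ℤ)) := by
        intro j hj
        have h5 : Nf j ≤ ∑ j ∈ Finset.range w, Nf j :=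
          Finset.single_le_sum (f := Nf) (fun _ _ => Nat.zero_le _) (Finset.mem_range.2 hj)
        have hNle : ((Nf j : ℕ):ℤ) ≤ (n:ℤ) := by
          have : Nf j ≤ n := by omega
          exact_mod_cast this
        have h := hNf j n hNle hn_lt
        have hKjδ : K j * δ ≤ ε := by
          have h6 : K j * δ ≤ Km * δ :=
            mul_le_mul_of_nonneg_right (hKle j (Finset.mem_range.2 hj)) hδ.le
          have h7 : Km * δ = ε := by rw [hδdef]; field_simp
          linarith
        linarith
      have hnpq : p*q ≤ n := by omega
      have hcast : ∀ j : ℕ, ((n - p*q : ℕ):ℤ) - (j:ℤ) = (n:ℤ) - ((p*q + j : ℕ):ℤ) := by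
        intro j
        have := Nat.cast_sub (R := ℤ) hnpq
        push_cast [this]
        ring
      have hVc := hVn (n - p*q)
      have hbp : (p:ℝ) * (L - ε) ≤ ∑ j ∈ Finset.range p, Gg p q ρ (((n - p*q : ℕ):ℤ) - j) := by
        have hterm : ∀ j ∈ Finset.range p, L - ε ≤ Gg p q ρ (((n-p*q:ℕ):ℤ) - j) := by
          intro j hj
          have hj' := Finset.mem_range.1 hj
          rw [hcast j]
          exact (hwin j (by omega)).le
        calc (p:ℝ)*(L-ε) = ∑ _j ∈ Finset.range p, (L - ε) := by
              rw [Finset.sum_const, Finset.card_range, nsmul_eq_mul]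
          _ ≤ ∑ j ∈ Finset.range p, Gg p q ρ (((n-p*q:ℕ):ℤ) - j) := Finset.sum_le_sum hterm
      have hbq : (q:ℝ) * (L - ε) ≤ ∑ j ∈ Finset.range q, Gg p q ρ (((n - p*q : ℕ):ℤ) - j) := by
        have hterm : ∀ j ∈ Finset.range q, L - ε ≤ Gg p q ρ (((n-p*q:ℕ):ℤ) - j) := by
          intro j hj
          have hj' := Finset.mem_range.1 hj
          rw [hcast j]
          exact (hwin j (by omega)).le
        calc (q:ℝ)*(L-ε) = ∑ _j ∈ Finset.range q, (L - ε) := by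
              rw [Finset.sum_const, Finset.card_range, nsmul_eq_mul]
          _ ≤ ∑ j ∈ Finset.range q, Gg p q ρ (((n-p*q:ℕ):ℤ) - j) := Finset.sum_le_sum hterm
      rw [hμ_def]
      nlinarith [hap, haq, hbp, hbq, hVc]
    by_contra hcon
    push_neg at hcon
    have hδ : 0 < (μ*L - c)/(2*μ) := div_pos (by linarith) (by linarith)
    have h8 := hstep _ hδ
    have h9 : μ * ((μ*L - c)/(2*μ)) = (μ*L - c)/2 := by field_simp
    nlinarith
  have hD : c ≤ μ * l := by
    have hstep : ∀ ε : ℝ, 0 < ε → c ≤ μ * (l + ε) := by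
      intro ε hε
      choose K hK1 hKs using fun j : ℕ => goodTl (p*q + j) (Nat.le_add_right _ _)
      set w : ℕ := p + q with hw
      set Km : ℝ := ∑ j ∈ Finset.range w, K j with hKm
      have hKnn : ∀ j : ℕ, (0:ℝ) ≤ K j := fun j => le_trans zero_le_one (hK1 j)
      have hKle : ∀ j ∈ Finset.range w, K j ≤ Km :=
        fun j hj => Finset.single_le_sum (f := K) (fun j _ => hKnn j) hj
      have hKmpos : 0 < Km := lt_of_lt_of_le one_pos
        (le_trans (hK1 0) (hKle 0 (Finset.mem_range.2 (by omega))))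
      set δ : ℝ := ε / Km with hδdef
      have hδ : 0 < δ := div_pos hε hKmpos
      choose Nf hNf using fun j : ℕ => hKs j δ hδ
      have freql : ∃ᶠ n : ℕ in Filter.atTop, g n < l + δ :=
        Filter.frequently_lt_of_liminf_lt (hb_le.isCoboundedUnder_ge) (by linarith)
      obtain ⟨n, hn_ge, hn_lt⟩ :=
        (Filter.frequently_atTop.1 freql) (p*q + w + ∑ j ∈ Finset.range w, Nf j)
      have hwin : ∀ j : ℕ, j < w → Gg p q ρ ((n:ℤ) - ((p*q + j : ℕ):ℤ)) < l + ε := by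
        intro j hj
        have h5 : Nf j ≤ ∑ j ∈ Finset.range w, Nf j :=
          Finset.single_le_sum (f := Nf) (fun _ _ => Nat.zero_le _) (Finset.mem_range.2 hj)
        have hNle : ((Nf j : ℕ):ℤ) ≤ (n:ℤ) := by
          have : Nf j ≤ n := by omega
          exact_mod_cast this
        have h := hNf j n hNle hn_lt
        have hKjδ : K j * δ ≤ ε := by
          have h6 : K j * δ ≤ Km * δ :=
            mul_le_mul_of_nonneg_right (hKle j (Finset.mem_range.2 hj)) hδ.le
          have h7 : Km * δ = ε := by rw [hδdef]; field_simp
          linarith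
        linarith
      have hnpq : p*q ≤ n := by omega
      have hcast : ∀ j : ℕ, ((n - p*q : ℕ):ℤ) - (j:ℤ) = (n:ℤ) - ((p*q + j : ℕ):ℤ) := by
        intro j
        have := Nat.cast_sub (R := ℤ) hnpq
        push_cast [this]
        ring
      have hVc := hVn (n - p*q)
      have hbp : ∑ j ∈ Finset.range p, Gg p q ρ (((n - p*q : ℕ):ℤ) - j) ≤ p * (l + ε) := by
        have hterm : ∀ j ∈ Finset.range p, Gg p q ρ (((n-p*q:ℕ):ℤ) - j) ≤ l + ε := by
          intro j hj
          have hj' := Finset.mem_range.1 hj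
          rw [hcast j]
          exact (hwin j (by omega)).le
        calc ∑ j ∈ Finset.range p, Gg p q ρ (((n-p*q:ℕ):ℤ) - j)
            ≤ ∑ _j ∈ Finset.range p, (l + ε) := Finset.sum_le_sum hterm
          _ = p * (l + ε) := by
              rw [Finset.sum_const, Finset.card_range, nsmul_eq_mul]
      have hbq : ∑ j ∈ Finset.range q, Gg p q ρ (((n - p*q : ℕ):ℤ) - j) ≤ q * (l + ε) := by
        have hterm : ∀ j ∈ Finset.range q, Gg p q ρ (((n-p*q:ℕ):ℤ) - j) ≤ l + ε := by
          intro j hj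
          have hj' := Finset.mem_range.1 hj
          rw [hcast j]
          exact (hwin j (by omega)).le
        calc ∑ j ∈ Finset.range q, Gg p q ρ (((n-p*q:ℕ):ℤ) - j)
            ≤ ∑ _j ∈ Finset.range q, (l + ε) := Finset.sum_le_sum hterm
          _ = q * (l + ε) := by
              rw [Finset.sum_const, Finset.card_range, nsmul_eq_mul]
      rw [hμ_def]
      nlinarith [hap, haq, hbp, hbq, hVc]
    by_contra hcon
    push_neg at hcon
    have hδ : 0 < (c - μ*l)/(2*μ) := div_pos (by linarith) (by linarith)
    have h8 := hstep _ hδ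
    have h9 : μ * ((c - μ*l)/(2*μ)) = (c - μ*l)/2 := by field_simp
    nlinarith
  have hLeq : Filter.limsup g Filter.atTop = c/μ := by
    rw [← hL_def, eq_div_iff (ne_of_gt hμpos)]
    linarith
  have hleq : Filter.liminf g Filter.atTop = c/μ := by
    rw [← hl_def, eq_div_iff (ne_of_gt hμpos)]
    linarith
  exact tendsto_of_liminf_eq_limsup hleq hLeq hb_le hb_ge

end

lemma col_sum (p q : ℕ) (hp : 0 < p) (hq : 0 < q) (hne : p ≠ q)
    (m : ℕ) (hm : m = max p q)
    (M : Matrix (Fin m) (Fin m) ℝ)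
    (hM : ∀ i j : Fin m, M i j =
      if (j : ℕ) = (i : ℕ) + 1 then 1
      else if (j : ℕ) = 0 ∧ (i : ℕ) + 1 = p then 1
      else if (j : ℕ) = 0 ∧ (i : ℕ) + 1 = q then 4
      else 0) :
    ∀ (n : ℕ) (k : Fin m), ∑ i : Fin m, (M ^ n) i k = pinf p q (n - (k : ℕ)) := by
  have hpm : p ≤ m := by omega
  have hqm : q ≤ m := by omega
  intro n
  induction n with
  | zero =>
    intro k
    have : ((0:ℕ) - (k:ℕ)) = 0 := by omega
    rw [this]
    simp [Matrix.one_apply, pinf]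
  | succ n ih =>
    intro k
    have hmul : ∀ i : Fin m, (M ^ (n+1)) i k = ∑ j : Fin m, (M ^ n) i j * M j k := by
      intro i
      rw [pow_succ, Matrix.mul_apply]
    have hswap : ∑ i : Fin m, (M ^ (n+1)) i k
        = ∑ j : Fin m, (∑ i : Fin m, (M ^ n) i j) * M j k := by
      simp only [hmul]
      rw [Finset.sum_comm]
      exact Finset.sum_congr rfl fun j _ => by rw [Finset.sum_mul]
    rw [hswap]
    simp only [ih]
    by_cases hk : (k : ℕ) = 0
    · -- column 0
      set jp : Fin m := ⟨p - 1, by omega⟩ with hjp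
      set jq : Fin m := ⟨q - 1, by omega⟩ with hjq
      have hterm : ∀ j : Fin m, pinf p q (n - (j:ℕ)) * M j k
          = (if j = jp then pinf p q (n - (p-1)) else 0)
            + (if j = jq then 4 * pinf p q (n - (q-1)) else 0) := by
        intro j
        rw [hM j k]
        have hjp1 : (jp : ℕ) = p - 1 := rfl
        have hjq1 : (jq : ℕ) = q - 1 := rfl
        by_cases h1 : j = jp
        · subst h1
          rw [if_neg (by omega), if_pos ⟨hk, by omega⟩, if_pos rfl,
            if_neg (by intro h; exact absurd (Fin.ext (by omega) : (⟨p-1,by omega⟩ : Fin m) = jq) (by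
              intro hcon
              have := congrArg Fin.val hcon
              omega))]
          · ring
        · by_cases h2 : j = jq
          · subst h2
            rw [if_neg (by omega), if_neg (by
                intro hcon
                exact h1 (Fin.ext (by omega))),
              if_pos ⟨hk, by omega⟩, if_neg h1, if_pos rfl]
            ring
          · have hv1 : ¬((j:ℕ) + 1 = p) := by
              intro hcon
              exact h1 (Fin.ext (by omega))
            have hv2 : ¬((j:ℕ) + 1 = q) := by
              intro hcon
              exact h2 (Fin.ext (by omega))
            rw [if_neg (by omega), if_neg (by tauto), if_neg (by tauto),
              if_neg h1, if_neg h2]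
            ring
      rw [Finset.sum_congr rfl fun j _ => hterm j, Finset.sum_add_distrib,
        Finset.sum_ite_eq' Finset.univ jp, Finset.sum_ite_eq' Finset.univ jq,
        if_pos (Finset.mem_univ _), if_pos (Finset.mem_univ _)]
      have hps : pinf p q (n - (p-1)) = if 0 < p ∧ p ≤ n+1 then pinf p q (n+1-p) else 1 := by
        split_ifs with h
        · congr 1; omega
        · rw [show n - (p-1) = 0 by omega]; simp [pinf]
      have hqs : pinf p q (n - (q-1)) = if 0 < q ∧ q ≤ n+1 then pinf p q (n+1-q) else 1 := by
        split_ifs with h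
        · congr 1; omega
        · rw [show n - (q-1) = 0 by omega]; simp [pinf]
      rw [show n + 1 - (k:ℕ) = n + 1 by omega, pinf, ← hps, ← hqs]
    · -- column k ≥ 1
      set jk : Fin m := ⟨(k:ℕ) - 1, by omega⟩ with hjk
      have hjkv : (jk : ℕ) = (k:ℕ) - 1 := rfl
      have hterm : ∀ j : Fin m, pinf p q (n - (j:ℕ)) * M j k
          = if j = jk then pinf p q (n - ((k:ℕ)-1)) else 0 := by
        intro j
        rw [hM j k]
        by_cases h1 : j = jk
        · subst h1
          rw [if_pos (by omega), if_pos rfl]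
          ring
        · have hv : ¬((k:ℕ) = (j:ℕ) + 1) := by
            intro hcon
            exact h1 (Fin.ext (by omega))
          rw [if_neg hv, if_neg (by tauto), if_neg (by tauto), if_neg h1]
          ring
      rw [Finset.sum_congr rfl fun j _ => hterm j,
        Finset.sum_ite_eq' Finset.univ jk, if_pos (Finset.mem_univ _)]
      congr 1
      omega


theorem stmt_13 (p q : ℕ) (hp : 0 < p) (hq : 0 < q) (hne : p ≠ q)
    (hco : Nat.Coprime p q) (m : ℕ) (hm : m = max p q)
    (M : Matrix (Fin m) (Fin m) ℝ)
    (hM : ∀ i j : Fin m, M i j =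
      if (j : ℕ) = (i : ℕ) + 1 then 1
      else if (j : ℕ) = 0 ∧ (i : ℕ) + 1 = p then 1
      else if (j : ℕ) = 0 ∧ (i : ℕ) + 1 = q then 4
      else 0)
    (r : ℝ) (hr0 : 0 < r) (hr1 : r < 1) (hr : r ^ (2 * p) + 4 * r ^ (2 * q) = 1)
    (k : Fin m) :
    Filter.Tendsto (fun n : ℕ => r ^ (2 * n) * ∑ i : Fin m, (M ^ n) i k)
      Filter.atTop
      (nhds (4 * r ^ (2 * ((k : ℕ) + 1)) /
        ((1 - r ^ 2) * (p * r ^ (2 * p) + 4 * q * r ^ (2 * q))))) := by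
  set ρ : ℝ := r^2 with hρdef
  have hρ0 : (0:ℝ) < ρ := by positivity
  have hρ1 : ρ < 1 := by nlinarith
  have hpow : ∀ t : ℕ, r ^ (2*t) = ρ^t := by
    intro t
    rw [pow_mul, ← hρdef]
  have hsum : ρ^p + 4*ρ^q = 1 := by
    rw [← hpow p, ← hpow q]; exact hr
  have hap : (0:ℝ) < ρ^p := pow_pos hρ0 p
  have haq : (0:ℝ) < ρ^q := pow_pos hρ0 q
  have hppos : (0:ℝ) < (p:ℝ) := by exact_mod_cast hp
  have hqpos : (0:ℝ) < (q:ℝ) := by exact_mod_cast hq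
  have hμpos : (0:ℝ) < (p:ℝ)*ρ^p + 4*(q:ℝ)*ρ^q := by
    have h1 := mul_pos hppos hap
    have h2 := mul_pos hqpos haq
    nlinarith
  have h1ρ : (1:ℝ) - ρ ≠ 0 := sub_ne_zero.2 (ne_of_gt (by linarith))
  have hcol := col_sum p q hp hq hne m hm M hM
  have hmain := main_conv p q ρ hp hq hρ0 hρ1 hsum hco
  rw [hpow p, hpow q, hpow ((k:ℕ)+1)]
  have hval : 4*ρ^((k:ℕ)+1)/((1-ρ)*((p:ℝ)*ρ^p + 4*(q:ℝ)*ρ^q))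
      = ρ^(k:ℕ) * ((4*ρ/(1-ρ)) / ((p:ℝ)*ρ^p + 4*(q:ℝ)*ρ^q)) := by
    field_simp
    ring
  have hgoalval : (4 * ρ^((k:ℕ)+1) /
      ((1 - ρ) * ((p:ℝ) * ρ^p + 4 * (q:ℝ) * ρ^q)))
      = ρ^(k:ℕ) * ((4*ρ/(1-ρ)) / ((p:ℝ)*ρ^p + 4*(q:ℝ)*ρ^q)) := hval
  rw [hgoalval]
  have hshift := (hmain.comp (Filter.tendsto_sub_atTop_nat (k:ℕ))).const_mul (ρ^(k:ℕ))
  refine Filter.Tendsto.congr' ?_ hshift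
  refine Filter.eventually_atTop.2 ⟨(k:ℕ), fun n hn => ?_⟩
  show ρ^(k:ℕ) * Gg p q ρ ((n - (k:ℕ) : ℕ) : ℤ) = r ^ (2*n) * ∑ i : Fin m, (M ^ n) i k
  rw [hcol n k, Gg_nat, hpow n]
  have hpadd : ρ^(k:ℕ) * ρ^(n - (k:ℕ)) = ρ^n := by
    rw [← pow_add]
    congr 1
    omega
  rw [← mul_assoc, hpadd]
end

section
/- Let p and q be distinct coprime positive integers, set m = max(p,q), and let M be the m×m real matrix (rows and columns indexed by 1,…,m) whose (i,j) entry equals 1 if j = i+1, whose (p,1) entry equals 1, whose (q,1) entry equals 4, and whose remaining entries are 0. Let r be the unique real number in (0,1) satisfying r^{2p} + 4r^{2q} = 1. Define ν ∈ ℝ^m by ν_k = ((1 − r²)/4) · (r^{2p}·H(p−k) + 4r^{2q}·H(q−k)) · r^{−2k}, where H(j) = 1 if j ≥ 0 and H(j) = 0 otherwise. Then every entry of ν is positive, Σ_{k=1}^{m} ν_k = 1, and M ν = r^{−2} ν. -/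
/-- auxiliary function: the value of the k-th entry of the eigenvector,
expressed in terms of `s = r ^ 2`. -/
noncomputable def gfun (p q : ℕ) (s : ℝ) (n : ℕ) : ℝ :=
  (1 - s) / 4 * (s ^ p * (if n ≤ p then 1 else 0) + 4 * s ^ q * (if n ≤ q then 1 else 0)) *
    (s⁻¹) ^ n

lemma gfun_pos {p q : ℕ} {s : ℝ} (hs0 : 0 < s) (hs1 : s < 1) {n : ℕ}
    (h : n ≤ p ∨ n ≤ q) : 0 < gfun p q s n := by
  unfold gfun
  have h1 : (0:ℝ) < s ^ p := pow_pos hs0 p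
  have h2 : (0:ℝ) < s ^ q := pow_pos hs0 q
  have h3 : (0:ℝ) < (s⁻¹) ^ n := pow_pos (inv_pos.2 hs0) n
  have h4 : (0:ℝ) < (1 - s) / 4 := by linarith
  split_ifs with ha hb <;>
    first
      | (exfalso; omega)
      | nlinarith [mul_pos (mul_pos h4 h1) h3, mul_pos (mul_pos h4 h2) h3]

lemma gfun_eq_zero {p q : ℕ} {s : ℝ} {n : ℕ} (hpn : p < n) (hqn : q < n) :
    gfun p q s n = 0 := by
  unfold gfun
  rw [if_neg (by omega), if_neg (by omega)]
  ring

lemma gfun_one {p q : ℕ} {s : ℝ} (hp : 0 < p) (hq : 0 < q)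
    (hsum : s ^ p + 4 * s ^ q = 1) : gfun p q s 1 = (1 - s) / 4 * s⁻¹ := by
  unfold gfun
  rw [if_pos (by omega), if_pos (by omega)]
  simp only [pow_one]
  linear_combination ((1 - s) / 4 * s⁻¹) * hsum

lemma gfun_step {p q : ℕ} {s : ℝ} (hsne : s ≠ 0) (hne : p ≠ q) (n : ℕ) :
    s⁻¹ * gfun p q s (n + 1) =
      gfun p q s (n + 2) +
        ((if n + 1 = p then 1 else 0) + 4 * (if n + 1 = q then (1:ℝ) else 0)) *
          ((1 - s) / 4 * s⁻¹) := by
  have hsx : s * s⁻¹ = 1 := mul_inv_cancel₀ hsne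
  have hpn : s ^ n * (s⁻¹) ^ n = 1 := by
    rw [inv_pow]; exact mul_inv_cancel₀ (pow_ne_zero _ hsne)
  by_cases hp' : n + 1 = p
  · subst hp'
    have hq' : n + 1 ≠ q := by omega
    unfold gfun
    split_ifs <;>
      first
        | (exfalso; omega)
        | linear_combination ((1 - s) / 4 * s * s⁻¹ ^ 2) * hpn + ((1 - s) / 4 * s⁻¹) * hsx
  · by_cases hq' : n + 1 = q
    · subst hq'
      unfold gfun
      split_ifs <;>
        first
          | (exfalso; omega)
          | linear_combination ((1 - s) * s * s⁻¹ ^ 2) * hpn + ((1 - s) * s⁻¹) * hsx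
    · unfold gfun
      split_ifs <;> first | (exfalso; omega) | ring

lemma gfun_sum {p q m : ℕ} {s : ℝ} (hs0 : 0 < s) (hs1 : s < 1)
    (hpm : p ≤ m) (hqm : q ≤ m) (hsum : s ^ p + 4 * s ^ q = 1) :
    ∑ k ∈ Finset.range m, gfun p q s (k + 1) = 1 := by
  have hsne : s ≠ 0 := ne_of_gt hs0
  have hsx : s * s⁻¹ = 1 := mul_inv_cancel₀ hsne
  have hxne : s⁻¹ - 1 ≠ 0 := by
    intro hc
    nlinarith [hsx]
  have hcut : ∀ (n : ℕ), n ≤ m → ∀ c : ℝ,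
      (∑ k ∈ Finset.range m, (if k + 1 ≤ n then c * (s⁻¹) ^ (k + 1) else 0))
        = c * s⁻¹ * ∑ k ∈ Finset.range n, (s⁻¹) ^ k := by
    intro n hn c
    rw [← Finset.sum_subset (Finset.range_subset_range.2 hn)
        (by
          intro x hx hnx
          simp only [Finset.mem_range] at hx hnx
          rw [if_neg (by omega)])]
    rw [Finset.mul_sum]
    apply Finset.sum_congr rfl
    intro k hk
    simp only [Finset.mem_range] at hk
    rw [if_pos (by omega), pow_succ]
    ring
  have hsplit : ∀ k : ℕ, gfun p q s (k + 1) =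
      (if k + 1 ≤ p then ((1 - s) / 4 * s ^ p) * (s⁻¹) ^ (k + 1) else 0)
        + (if k + 1 ≤ q then ((1 - s) * s ^ q) * (s⁻¹) ^ (k + 1) else 0) := by
    intro k
    unfold gfun
    split_ifs <;> ring
  rw [Finset.sum_congr rfl (fun k _ => hsplit k), Finset.sum_add_distrib,
    hcut p hpm _, hcut q hqm _]
  have e1 := geom_sum_mul (s⁻¹) p
  have e2 := geom_sum_mul (s⁻¹) q
  have hpx : s ^ p * (s⁻¹) ^ p = 1 := by
    rw [inv_pow]; exact mul_inv_cancel₀ (pow_ne_zero _ hsne)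
  have hqx : s ^ q * (s⁻¹) ^ q = 1 := by
    rw [inv_pow]; exact mul_inv_cancel₀ (pow_ne_zero _ hsne)
  apply mul_right_cancel₀ hxne
  linear_combination ((1 - s) / 4 * s ^ p * s⁻¹) * e1 + ((1 - s) * s ^ q * s⁻¹) * e2 +
    ((1 - s) / 4 * s⁻¹) * hpx + ((1 - s) * s⁻¹) * hqx - ((1 - s) / 4 * s⁻¹) * hsum - hsx

theorem stmt_14 (p q : ℕ) (hp : 0 < p) (hq : 0 < q) (hne : p ≠ q)
    (hco : Nat.Coprime p q) (m : ℕ) (hm : m = max p q)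
    (M : Matrix (Fin m) (Fin m) ℝ)
    (hM : ∀ i j : Fin m, M i j =
      if (j : ℕ) = (i : ℕ) + 1 then 1
      else if (j : ℕ) = 0 ∧ (i : ℕ) + 1 = p then 1
      else if (j : ℕ) = 0 ∧ (i : ℕ) + 1 = q then 4
      else 0)
    (r : ℝ) (hr0 : 0 < r) (hr1 : r < 1) (hr : r ^ (2 * p) + 4 * r ^ (2 * q) = 1)
    (ν : Fin m → ℝ)
    (hν : ∀ k : Fin m, ν k = (1 - r ^ 2) / 4 *
      (r ^ (2 * p) * (if (k : ℕ) + 1 ≤ p then 1 else 0) +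
        4 * r ^ (2 * q) * (if (k : ℕ) + 1 ≤ q then 1 else 0)) *
      (r ^ (2 * ((k : ℕ) + 1)))⁻¹) :
    (∀ k, 0 < ν k) ∧ (∑ k, ν k = 1) ∧ M.mulVec ν = (r ^ 2)⁻¹ • ν := by
  obtain ⟨s, hs⟩ : ∃ s : ℝ, r ^ 2 = s := ⟨_, rfl⟩
  have hs0 : (0:ℝ) < s := by rw [← hs]; positivity
  have hs1 : s < 1 := by rw [← hs]; nlinarith
  have hsne : s ≠ 0 := ne_of_gt hs0
  have hA : r ^ (2 * p) = s ^ p := by rw [pow_mul, hs]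
  have hB : r ^ (2 * q) = s ^ q := by rw [pow_mul, hs]
  have hsum : s ^ p + 4 * s ^ q = 1 := by rw [← hA, ← hB]; exact hr
  have hpm : p ≤ m := by omega
  have hqm : q ≤ m := by omega
  have hm0 : 0 < m := by omega
  have hνg : ∀ k : Fin m, ν k = gfun p q s ((k : ℕ) + 1) := by
    intro k
    rw [hν k, hA, hB]
    unfold gfun
    rw [pow_mul, hs, inv_pow]
  refine ⟨?_, ?_, ?_⟩
  · intro k
    rw [hνg k]
    exact gfun_pos hs0 hs1 (by have := k.isLt; omega)
  · rw [Finset.sum_congr rfl (fun k _ => hνg k),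
      Fin.sum_univ_eq_sum_range (fun k => gfun p q s (k + 1)) m]
    exact gfun_sum hs0 hs1 hpm hqm hsum
  · funext i
    have hpoint : ∀ j : Fin m, M i j * ν j =
        (if (j : ℕ) = (i : ℕ) + 1 then gfun p q s ((j : ℕ) + 1) else 0)
          + (if (j : ℕ) = 0 then
              ((if (i : ℕ) + 1 = p then 1 else 0) + 4 * (if (i : ℕ) + 1 = q then (1:ℝ) else 0))
                * gfun p q s 1 else 0) := by
      intro j
      by_cases h2 : (j : ℕ) = 0
      · have hj1 : (j : ℕ) + 1 = 1 := by omega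
        rw [hM i j, hνg j, hj1]
        split_ifs <;> first | (exfalso; omega) | ring
      · rw [hM i j, hνg j]
        split_ifs <;> first | (exfalso; omega) | ring
    have hmv : M.mulVec ν i = ∑ j, M i j * ν j := rfl
    rw [Pi.smul_apply, smul_eq_mul, hmv,
      Finset.sum_congr rfl (fun j _ => hpoint j), Finset.sum_add_distrib]
    have hfirst : (∑ j : Fin m,
        (if (j : ℕ) = (i : ℕ) + 1 then gfun p q s ((j : ℕ) + 1) else 0))
          = gfun p q s ((i : ℕ) + 2) := by
      by_cases h : (i : ℕ) + 1 < m
      · rw [Finset.sum_eq_single (⟨(i : ℕ) + 1, h⟩ : Fin m)]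
        · rw [if_pos rfl]
        · intro j _ hj
          rw [if_neg]
          intro hc
          exact hj (Fin.ext hc)
        · intro habs
          exact absurd (Finset.mem_univ _) habs
      · have h2 : (i : ℕ) + 1 = m := by have := i.isLt; omega
        rw [Finset.sum_eq_zero (fun j _ => if_neg (by have := j.isLt; omega))]
        rw [show (i : ℕ) + 2 = m + 1 by omega]
        exact (gfun_eq_zero (by omega) (by omega)).symm
    have hsecond : (∑ j : Fin m,
        (if (j : ℕ) = 0 then
            ((if (i : ℕ) + 1 = p then 1 else 0) + 4 * (if (i : ℕ) + 1 = q then (1:ℝ) else 0))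
              * gfun p q s 1 else 0))
          = ((if (i : ℕ) + 1 = p then 1 else 0) + 4 * (if (i : ℕ) + 1 = q then (1:ℝ) else 0))
              * gfun p q s 1 := by
      rw [Finset.sum_eq_single (⟨0, hm0⟩ : Fin m)]
      · rw [if_pos rfl]
      · intro j _ hj
        rw [if_neg]
        intro hc
        exact hj (Fin.ext hc)
      · intro habs
        exact absurd (Finset.mem_univ _) habs
    rw [hfirst, hsecond, hνg i, hs, gfun_step hsne hne (i : ℕ),
      gfun_one hp hq hsum]
end

section
/- Let p and q be positive integers, set m = max(p,q), and let r be a real number in (0,1) satisfying r^{2p} + 4r^{2q} = 1. Let c₁ and c₂ be real numbers with |c₁| < 1 and |c₂| ≤ 1. Then every complex root z of the polynomial z^{2m} − 4c₁·z^{2m−q} − z^{2m−2p} − 4c₂·z^{2m−p−q} satisfies |z| < r^{−2}. -/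
open Polynomial

theorem stmt_15 (p q : ℕ) (hp : 0 < p) (hq : 0 < q) (m : ℕ) (hm : m = max p q)
    (r : ℝ) (hr0 : 0 < r) (hr1 : r < 1) (hr : r ^ (2 * p) + 4 * r ^ (2 * q) = 1)
    (c₁ c₂ : ℝ) (hc₁ : |c₁| < 1) (hc₂ : |c₂| ≤ 1) (z : ℂ)
    (hz : (X ^ (2 * m) - C ((4 * c₁ : ℝ) : ℂ) * X ^ (2 * m - q)
        - X ^ (2 * m - 2 * p) - C ((4 * c₂ : ℝ) : ℂ) * X ^ (2 * m - p - q)).eval z = 0) :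
    ‖z‖ < r⁻¹ ^ 2 := by
  by_contra hcon
  push_neg at hcon
  have hpm : p ≤ m := hm ▸ le_max_left p q
  have hqm : q ≤ m := hm ▸ le_max_right p q
  set t : ℝ := ‖z‖ with htdef
  have ht : r⁻¹ ^ 2 ≤ t := hcon
  have hrinv : (0:ℝ) < r⁻¹ ^ 2 := by positivity
  have ht0 : 0 < t := lt_of_lt_of_le hrinv ht
  simp only [eval_sub, eval_mul, eval_pow, eval_X, eval_C] at hz
  have heq : z ^ (2 * m) = ((4 * c₁ : ℝ) : ℂ) * z ^ (2 * m - q)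
      + z ^ (2 * m - 2 * p) + ((4 * c₂ : ℝ) : ℂ) * z ^ (2 * m - p - q) := by
    linear_combination hz
  have h1 : t ^ (2 * m) ≤ 4 * |c₁| * t ^ (2 * m - q) + t ^ (2 * m - 2 * p)
      + 4 * |c₂| * t ^ (2 * m - p - q) := by
    calc t ^ (2 * m) = ‖z ^ (2 * m)‖ := by rw [norm_pow]
    _ = ‖((4 * c₁ : ℝ) : ℂ) * z ^ (2 * m - q)
        + z ^ (2 * m - 2 * p) + ((4 * c₂ : ℝ) : ℂ) * z ^ (2 * m - p - q)‖ := by rw [heq]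
    _ ≤ ‖((4 * c₁ : ℝ) : ℂ) * z ^ (2 * m - q)‖
        + ‖z ^ (2 * m - 2 * p)‖
        + ‖((4 * c₂ : ℝ) : ℂ) * z ^ (2 * m - p - q)‖ := by
      refine le_trans (norm_add_le _ _) ?_
      gcongr
      exact norm_add_le _ _
    _ = 4 * |c₁| * t ^ (2 * m - q) + t ^ (2 * m - 2 * p)
        + 4 * |c₂| * t ^ (2 * m - p - q) := by
      simp [norm_mul, norm_pow, Complex.norm_real, abs_mul, htdef]
  have key : ∀ k j : ℕ, k + j = 2 * m → t ^ k ≤ (r ^ 2) ^ j * t ^ (2 * m) := by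
    intro k j hkj
    have h2 : (1:ℝ) ≤ (r ^ 2) ^ j * t ^ j := by
      have h3 : (r⁻¹ ^ 2) ^ j ≤ t ^ j := pow_le_pow_left₀ (by positivity) ht j
      calc (1:ℝ) = (r ^ 2) ^ j * (r⁻¹ ^ 2) ^ j := by
            rw [← mul_pow]; field_simp; simp
      _ ≤ (r ^ 2) ^ j * t ^ j := by
            have : (0:ℝ) ≤ (r ^ 2) ^ j := by positivity
            nlinarith
    calc t ^ k = t ^ k * 1 := by ring
    _ ≤ t ^ k * ((r ^ 2) ^ j * t ^ j) := by
        have : (0:ℝ) ≤ t ^ k := by positivity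
        nlinarith
    _ = (r ^ 2) ^ j * t ^ (2 * m) := by rw [← hkj, pow_add]; ring
  have kq := key (2 * m - q) q (by omega)
  have kp := key (2 * m - 2 * p) (2 * p) (by omega)
  have kpq := key (2 * m - p - q) (p + q) (by omega)
  have hA : r ^ (2 * p) = (r ^ 2) ^ p := by rw [pow_mul]
  have hB : r ^ (2 * q) = (r ^ 2) ^ q := by rw [pow_mul]
  have hApos : (0:ℝ) < (r ^ 2) ^ p := by positivity
  have hBpos : (0:ℝ) < (r ^ 2) ^ q := by positivity
  rw [hA, hB] at hr
  have hcoef : 4 * |c₁| * (r ^ 2) ^ q + (r ^ 2) ^ (2 * p)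
      + 4 * |c₂| * (r ^ 2) ^ (p + q) < 1 := by
    have e1 : (r ^ 2) ^ (2 * p) = (r ^ 2) ^ p * (r ^ 2) ^ p := by
      rw [two_mul, pow_add]
    have e2 : (r ^ 2) ^ (p + q) = (r ^ 2) ^ p * (r ^ 2) ^ q := by rw [pow_add]
    rw [e1, e2]
    nlinarith [mul_pos hApos hBpos, abs_nonneg c₁, abs_nonneg c₂]
  have htm : (0:ℝ) < t ^ (2 * m) := by positivity
  have hc1 : (0:ℝ) ≤ 4 * |c₁| := by positivity
  have hc2 : (0:ℝ) ≤ 4 * |c₂| := by positivity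
  nlinarith [mul_le_mul_of_nonneg_left kq hc1, mul_le_mul_of_nonneg_left kpq hc2,
    mul_lt_mul_of_pos_right hcoef htm]
end

section
/- Let α and β be real numbers with 0 < α < β and e^{−2α} + 4e^{−2β} = 1, and suppose α/β is irrational. Define F : ℂ → ℂ by F(λ) = e^{βλ} − e^{(β−α)λ} − 4. Then: (i) F(2) = 0; (ii) if λ is real and F(λ) = 0 then λ = 2; (iii) if λ ∈ ℂ satisfies F(λ) = 0 and λ ≠ 2, then Re λ < 2; (iv) every λ ∈ ℂ with F(λ) = 0 satisfies e^{β·Re λ} + e^{(β−α)·Re λ} ≥ 4. -/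
open Complex

set_option maxHeartbeats 1000000 in
theorem stmt_16 (α β : ℝ) (h0 : 0 < α) (hab : α < β)
    (habc : Real.exp (-2 * α) + 4 * Real.exp (-2 * β) = 1)
    (hirr : Irrational (α / β))
    (F : ℂ → ℂ)
    (hF : ∀ lam : ℂ, F lam =
      Complex.exp (β * lam) - Complex.exp ((β - α) * lam) - 4) :
    F 2 = 0 ∧
    (∀ x : ℝ, F (x : ℂ) = 0 → (x : ℝ) = 2) ∧
    (∀ lam : ℂ, F lam = 0 → lam ≠ 2 → lam.re < 2) ∧
    (∀ lam : ℂ, F lam = 0 →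
      4 ≤ Real.exp (β * lam.re) + Real.exp ((β - α) * lam.re)) := by
  have hβ : 0 < β := h0.trans hab
  have hβα : 0 < β - α := sub_pos.mpr hab
  -- key identity: e^{2β} = e^{2(β-α)} + 4
  have hkey : Real.exp (β * 2) = Real.exp ((β - α) * 2) + 4 := by
    have h1 : Real.exp (-2 * α) * Real.exp (β * 2) = Real.exp ((β - α) * 2) := by
      rw [← Real.exp_add]; ring_nf
    have h2 : Real.exp (-2 * β) * Real.exp (β * 2) = 1 := by
      rw [← Real.exp_add]; ring_nf; exact Real.exp_zero
    nlinarith [Real.exp_pos (β * 2)]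
  have gfact : ∀ x : ℝ, Real.exp (β * x) - Real.exp ((β - α) * x)
      = Real.exp ((β - α) * x) * (Real.exp (α * x) - 1) := by
    intro x
    rw [mul_sub, ← Real.exp_add, mul_one]
    ring_nf
  have gmono : ∀ x y : ℝ, 0 ≤ x → x < y →
      Real.exp (β * x) - Real.exp ((β - α) * x)
        < Real.exp (β * y) - Real.exp ((β - α) * y) := by
    intro x y hx hxy
    rw [gfact, gfact]
    have h1 : Real.exp ((β - α) * x) ≤ Real.exp ((β - α) * y) :=
      Real.exp_le_exp.mpr (by nlinarith)
    have h2 : Real.exp (α * x) < Real.exp (α * y) :=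
      Real.exp_lt_exp.mpr (by nlinarith)
    have h3 : (1 : ℝ) ≤ Real.exp (α * x) := Real.one_le_exp (by positivity)
    nlinarith [Real.exp_pos ((β - α) * y), Real.exp_pos ((β - α) * x)]
  -- the only real solution of g(x) = 4 is x = 2
  have greal : ∀ x : ℝ, Real.exp (β * x) - Real.exp ((β - α) * x) = 4 → x = 2 := by
    intro x hx
    rcases lt_trichotomy x 2 with h | h | h
    · exfalso
      rcases le_or_gt x 0 with hx0 | hx0
      · have h1 : Real.exp (α * x) ≤ 1 := Real.exp_le_one_iff.mpr (by nlinarith)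
        have := gfact x
        nlinarith [Real.exp_pos ((β - α) * x)]
      · have := gmono x 2 hx0.le h
        rw [hx] at this
        linarith
    · exact h
    · exfalso
      have := gmono 2 x (by norm_num) h
      rw [hx] at this
      linarith
  -- coercion helpers
  have hcast : ((β : ℂ) - α) = (((β - α : ℝ)) : ℂ) := by push_cast; ring
  -- part (i)
  have part1 : F 2 = 0 := by
    rw [hF]
    have e1 : (β : ℂ) * 2 = ((β * 2 : ℝ) : ℂ) := by push_cast; ring
    have e2 : ((β : ℂ) - α) * 2 = (((β - α) * 2 : ℝ) : ℂ) := by push_cast; ring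
    rw [e1, e2, ← Complex.ofReal_exp, ← Complex.ofReal_exp, hkey]
    push_cast
    ring
  refine ⟨part1, ?_, ?_, ?_⟩
  · -- part (ii)
    intro x hx
    rw [hF] at hx
    have e1 : (β : ℂ) * x = ((β * x : ℝ) : ℂ) := by push_cast; ring
    have e2 : ((β : ℂ) - α) * x = (((β - α) * x : ℝ) : ℂ) := by push_cast; ring
    rw [e1, e2, ← Complex.ofReal_exp, ← Complex.ofReal_exp] at hx
    have hx' : Real.exp (β * x) - Real.exp ((β - α) * x) - 4 = 0 := by
      exact_mod_cast hx
    exact greal x (by linarith)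
  · -- part (iii)
    intro lam hlam hlam2
    rw [hF] at hlam
    have heq : Complex.exp ((β : ℂ) * lam)
        = Complex.exp (((β : ℂ) - α) * lam) + 4 := by
      linear_combination hlam
    set r := lam.re with hr
    set t := lam.im with ht
    have hre1 : ((β : ℂ) * lam).re = β * r := Complex.re_ofReal_mul β lam
    have hre2 : (((β : ℂ) - α) * lam).re = (β - α) * r := by
      rw [hcast]; exact Complex.re_ofReal_mul (β - α) lam
    have him1 : ((β : ℂ) * lam).im = β * t := by
      simp [Complex.mul_im, ht]
    have him2 : (((β : ℂ) - α) * lam).im = (β - α) * t := by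
      rw [hcast]; simp [Complex.mul_im, ht]
    -- triangle inequality bound
    have hle : Real.exp (β * r) ≤ Real.exp ((β - α) * r) + 4 := by
      have h1 : Real.exp (β * r) = ‖Complex.exp ((β : ℂ) * lam)‖ := by
        rw [Complex.norm_exp, hre1]
      have h2 : ‖Complex.exp (((β : ℂ) - α) * lam) + 4‖
          ≤ Real.exp ((β - α) * r) + 4 := by
        calc ‖Complex.exp (((β : ℂ) - α) * lam) + 4‖
            ≤ ‖Complex.exp (((β : ℂ) - α) * lam)‖ + ‖(4 : ℂ)‖ := norm_add_le _ _
          _ = Real.exp ((β - α) * r) + 4 := by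
              rw [Complex.norm_exp, hre2]; norm_num
      rw [h1, heq]
      exact h2
    by_contra hcon
    push_neg at hcon
    have hr2 : r = 2 := by
      rcases eq_or_lt_of_le hcon with h | h
      · exact h.symm
      · exfalso
        have := gmono 2 r (by norm_num) h
        linarith
    -- equality case analysis
    set z := Complex.exp (((β : ℂ) - α) * lam) with hz
    have hA : ‖z‖ ^ 2 = Real.exp ((β - α) * 2) ^ 2 := by
      rw [hz, Complex.norm_exp, hre2, hr2]
    have hAsq : z.re ^ 2 + z.im ^ 2 = Real.exp ((β - α) * 2) ^ 2 := by
      rw [← hA, Complex.sq_norm, Complex.normSq_apply]; ring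
    have hB : ‖z + 4‖ = Real.exp (β * 2) := by
      rw [← heq, Complex.norm_exp, hre1, hr2]
    have hBsq : (z.re + 4) ^ 2 + z.im ^ 2 = (Real.exp ((β - α) * 2) + 4) ^ 2 := by
      have h1 : ‖z + 4‖ ^ 2 = Complex.normSq (z + 4) := Complex.sq_norm _
      rw [hB, hkey] at h1
      rw [Complex.normSq_apply] at h1
      simp only [Complex.add_re, Complex.add_im] at h1
      have h4re : (4 : ℂ).re = 4 := by norm_num
      have h4im : (4 : ℂ).im = 0 := by norm_num
      rw [h4re, h4im] at h1
      nlinarith [h1]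
    have h8 : (z.re + 4) ^ 2 + z.im ^ 2 - (z.re ^ 2 + z.im ^ 2)
        = (Real.exp ((β - α) * 2) + 4) ^ 2 - Real.exp ((β - α) * 2) ^ 2 := by
      rw [hAsq, hBsq]
    have hzre : z.re = Real.exp ((β - α) * 2) := by ring_nf at h8; linarith
    have hzim : z.im = 0 := by
      have h9 : z.re ^ 2 = Real.exp ((β - α) * 2) ^ 2 := by rw [hzre]
      have h10 : z.im ^ 2 = 0 := by linarith
      exact pow_eq_zero_iff (by norm_num) |>.mp h10
    -- extract cosines
    have hcos2 : Real.cos ((β - α) * t) = 1 := by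
      have h1 : z.re = Real.exp ((β - α) * 2) * Real.cos ((β - α) * t) := by
        rw [hz, Complex.exp_re, hre2, hr2, him2]
      rw [hzre] at h1
      have h2 : Real.exp ((β - α) * 2) * 1
          = Real.exp ((β - α) * 2) * Real.cos ((β - α) * t) := by
        rw [mul_one]; exact h1
      exact (mul_left_cancel₀ (Real.exp_pos _).ne' h2).symm
    have hcos1 : Real.cos (β * t) = 1 := by
      have h1 : (Complex.exp ((β : ℂ) * lam)).re
          = Real.exp (β * 2) * Real.cos (β * t) := by
        rw [Complex.exp_re, hre1, hr2, him1]
      have h2 : (Complex.exp ((β : ℂ) * lam)).re = Real.exp (β * 2) := by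
        rw [heq]
        simp only [Complex.add_re]
        rw [hzre]
        have h4re : (4 : ℂ).re = 4 := by norm_num
        rw [h4re, hkey]
      rw [h2] at h1
      have h3 : Real.exp (β * 2) * 1
          = Real.exp (β * 2) * Real.cos (β * t) := by
        rw [mul_one]; exact h1
      exact (mul_left_cancel₀ (Real.exp_pos _).ne' h3).symm
    obtain ⟨m, hm⟩ := (Real.cos_eq_one_iff _).mp hcos1
    obtain ⟨k, hk⟩ := (Real.cos_eq_one_iff _).mp hcos2
    rcases eq_or_ne t 0 with ht0 | ht0
    · apply hlam2
      apply Complex.ext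
      · simpa using hr2
      · simpa using ht0
    · have hπ := Real.pi_pos
      have hm0 : (m : ℝ) ≠ 0 := by
        intro h
        rw [h, zero_mul] at hm
        rcases mul_eq_zero.mp hm.symm with h' | h'
        · exact hβ.ne' h'
        · exact ht0 h'
      have hαt : α * t = ((m : ℝ) - k) * (2 * Real.pi) := by nlinarith [hm, hk]
      have hprop : α * (m : ℝ) = β * ((m : ℝ) - (k : ℝ)) := by
        have h1 : α * ((m : ℝ) * (2 * Real.pi)) = α * (β * t) := by rw [hm]
        have h2 : β * (((m : ℝ) - k) * (2 * Real.pi)) = β * (α * t) := by rw [← hαt]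
        have h3 : α * (β * t) = β * (α * t) := by ring
        have h4 : α * ((m : ℝ) * (2 * Real.pi))
            = β * (((m : ℝ) - k) * (2 * Real.pi)) := by rw [h1, h2, h3]
        have : (α * (m : ℝ)) * (2 * Real.pi) = (β * ((m : ℝ) - k)) * (2 * Real.pi) := by
          nlinarith [h4]
        exact mul_right_cancel₀ (by positivity) this
      apply hirr
      refine ⟨((m - k : ℤ) : ℚ) / ((m : ℤ) : ℚ), ?_⟩
      push_cast
      rw [div_eq_div_iff (by exact_mod_cast hm0) hβ.ne']
      linarith [hprop]
  · -- part (iv)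
    intro lam hlam
    rw [hF] at hlam
    have heq : Complex.exp ((β : ℂ) * lam)
        - Complex.exp (((β : ℂ) - α) * lam) = 4 := by
      linear_combination hlam
    have h4 : (4 : ℝ) = ‖Complex.exp ((β : ℂ) * lam)
        - Complex.exp (((β : ℂ) - α) * lam)‖ := by
      rw [heq]; norm_num
    calc (4 : ℝ) = ‖Complex.exp ((β : ℂ) * lam)
          - Complex.exp (((β : ℂ) - α) * lam)‖ := h4
      _ ≤ ‖Complex.exp ((β : ℂ) * lam)‖
          + ‖Complex.exp (((β : ℂ) - α) * lam)‖ := norm_sub_le _ _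
      _ = Real.exp (β * lam.re) + Real.exp ((β - α) * lam.re) := by
          rw [Complex.norm_exp,
            Complex.norm_exp, Complex.re_ofReal_mul, hcast, Complex.re_ofReal_mul]
end

section
/- Let α and β be real numbers with 0 < α < β and e^{−2α} + 4e^{−2β} = 1, and suppose α/β is irrational. Then there is no λ ∈ ℂ satisfying both e^{βλ} − e^{(β−α)λ} − 4 = 0 and β·e^{βλ} − (β−α)·e^{(β−α)λ} = 0; that is, the entire function F(λ) = e^{βλ} − e^{(β−α)λ} − 4 has no multiple zeros. -/
open Complex

lemma exp_eq_neg_real_aux (z : ℂ) (r : ℝ) (hr : r < 0) (h : Complex.exp z = (r : ℂ)) :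
    ∃ k : ℤ, Odd k ∧ z.im = k * Real.pi := by
  have him : Real.exp z.re * Real.sin z.im = 0 := by
    have := congrArg Complex.im h
    simpa [Complex.exp_im] using this
  have hsin : Real.sin z.im = 0 := by
    rcases mul_eq_zero.mp him with h' | h'
    · exact absurd h' (Real.exp_ne_zero _)
    · exact h'
  obtain ⟨k, hk⟩ := Real.sin_eq_zero_iff.mp hsin
  have hre : Real.exp z.re * Real.cos z.im = r := by
    have := congrArg Complex.re h
    simpa [Complex.exp_re] using this
  have hcos : Real.cos z.im < 0 := by
    nlinarith [Real.exp_pos z.re]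
  refine ⟨k, ?_, hk.symm⟩
  by_contra hodd
  rw [Int.not_odd_iff_even] at hodd
  obtain ⟨m, hm⟩ := hodd
  have hc1 : Real.cos z.im = 1 := by
    rw [← hk, hm]
    push_cast
    rw [show ((m : ℝ) + m) * Real.pi = (m : ℝ) * (2 * Real.pi) by ring]
    exact Real.cos_int_mul_two_pi m
  linarith

theorem stmt_17 (α β : ℝ) (h0 : 0 < α) (hab : α < β)
    (habc : Real.exp (-2 * α) + 4 * Real.exp (-2 * β) = 1)
    (hirr : Irrational (α / β)) :
    ¬ ∃ lam : ℂ,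
      Complex.exp (β * lam) - Complex.exp ((β - α) * lam) - 4 = 0 ∧
      (β : ℂ) * Complex.exp (β * lam) - ((β : ℂ) - (α : ℂ)) * Complex.exp ((β - α) * lam) = 0 := by
  rintro ⟨lam, h1, h2⟩
  have hβ : (0 : ℝ) < β := h0.trans hab
  have hα0 : (α : ℂ) ≠ 0 := by exact_mod_cast h0.ne'
  have hu : Complex.exp (↑β * lam) = Complex.exp (↑(β - α) * lam) + 4 := by
    push_cast at h1 ⊢
    linear_combination h1
  have hv : Complex.exp (↑(β - α) * lam) = ((-4 * β / α : ℝ) : ℂ) := by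
    have h2' : (β : ℂ) * (Complex.exp (↑(β - α) * lam) + 4)
        - ((β : ℂ) - (α : ℂ)) * Complex.exp (↑(β - α) * lam) = 0 := by
      push_cast at h2 hu ⊢
      rw [← hu]
      linear_combination h2
    -- α * v + 4β = 0
    have hv0 : (α : ℂ) * Complex.exp (↑(β - α) * lam) = -4 * β := by
      linear_combination h2'
    push_cast
    field_simp
    push_cast at hv0 ⊢
    linear_combination hv0
  have hu' : Complex.exp (↑β * lam) = ((-4 * (β - α) / α : ℝ) : ℂ) := by
    rw [hu, hv]
    push_cast
    field_simp
    ring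
  have hr1 : (-4 * (β - α) / α : ℝ) < 0 := by
    apply div_neg_of_neg_of_pos _ h0
    nlinarith
  have hr2 : (-4 * β / α : ℝ) < 0 := by
    apply div_neg_of_neg_of_pos _ h0
    nlinarith
  obtain ⟨k, hkodd, hk⟩ := exp_eq_neg_real_aux _ _ hr1 hu'
  obtain ⟨m, hmodd, hm⟩ := exp_eq_neg_real_aux _ _ hr2 hv
  have himβ : β * lam.im = (k : ℝ) * Real.pi := by
    have : ((β : ℂ) * lam).im = β * lam.im := by simp
    rw [← this]; exact hk
  have himβα : (β - α) * lam.im = (m : ℝ) * Real.pi := by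
    have : (((β - α : ℝ) : ℂ) * lam).im = (β - α) * lam.im := by simp
    rw [← this]; exact hm
  have hk0 : (k : ℝ) ≠ 0 :=
    Int.cast_ne_zero.mpr (by rcases hkodd with ⟨j, hj⟩; omega)
  have hπ : Real.pi ≠ 0 := Real.pi_ne_zero
  have him0 : lam.im ≠ 0 := by
    intro h
    rw [h, mul_zero] at himβ
    rcases mul_eq_zero.mp himβ.symm with h' | h'
    exacts [hk0 h', hπ h']
  have hαim : α * lam.im = ((k : ℝ) - (m : ℝ)) * Real.pi := by
    have := himβ
    nlinarith [himβα]
  have key : α * (k : ℝ) = β * ((k : ℝ) - (m : ℝ)) := by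
    have h1' : α * (β * lam.im) = β * (α * lam.im) := by ring
    rw [himβ, hαim] at h1'
    have h2' : (α * (k : ℝ)) * Real.pi = (β * ((k : ℝ) - (m : ℝ))) * Real.pi := by
      linarith [h1']
    exact mul_right_cancel₀ hπ h2'
  have hrat : α / β = (((k - m : ℤ) : ℚ) / ((k : ℤ) : ℚ) : ℚ) := by
    push_cast
    rw [div_eq_div_iff hβ.ne' hk0]
    linarith [key]
  exact hirr ⟨_, hrat.symm⟩
end

section
/- Let M be the 3×3 real matrix [[1,0,1],[2,0,0],[0,2,0]]. Then the sequence n ↦ (Mⁿ)₁₁ − (Mⁿ)₂₁ is unbounded: for every real C there exists a natural number n with |(Mⁿ)₁₁ − (Mⁿ)₂₁| > C. -/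
noncomputable def Mtil : Matrix (Fin 3) (Fin 3) ℝ := !![1, 0, 1; 2, 0, 0; 0, 2, 0]

noncomputable def dTil (n : ℕ) : ℝ := (Mtil ^ n) 0 0 - (Mtil ^ n) 1 0

lemma Mtil_step (n : ℕ) :
    (Mtil ^ (n+1)) 0 0 = (Mtil ^ n) 0 0 + (Mtil ^ n) 2 0 ∧
    (Mtil ^ (n+1)) 1 0 = 2 * (Mtil ^ n) 0 0 ∧
    (Mtil ^ (n+1)) 2 0 = 2 * (Mtil ^ n) 1 0 := by
  rw [pow_succ']
  refine ⟨?_, ?_, ?_⟩ <;> simp [Mtil, Matrix.mul_apply, Fin.sum_univ_three]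

lemma dTil_rec (n : ℕ) : dTil (n+2) = -(dTil (n+1)) - 2 * dTil n := by
  obtain ⟨h1, h2, h3⟩ := Mtil_step n
  obtain ⟨h1', h2', h3'⟩ := Mtil_step (n+1)
  simp only [dTil]
  rw [h1', h2', h1, h2, h3]
  ring

lemma dTil_q (n : ℕ) :
    dTil (n+1) ^ 2 + dTil (n+1) * dTil n + 2 * dTil n ^ 2 = 2 ^ (n+1) := by
  induction n with
  | zero =>
      have h0 : dTil 0 = 1 := by simp [dTil]
      have h1 : dTil 1 = -1 := by
        simp [dTil, Mtil, pow_one]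
        norm_num
      rw [h0, h1]; norm_num
  | succ k ih =>
      rw [dTil_rec k]
      ring_nf
      ring_nf at ih
      linarith [ih]

theorem stmt_19 (M : Matrix (Fin 3) (Fin 3) ℝ)
    (hM : M = !![1, 0, 1; 2, 0, 0; 0, 2, 0]) (C : ℝ) :
    ∃ n : ℕ, C < |(M ^ n) 0 0 - (M ^ n) 1 0| := by
  subst hM
  set K : ℝ := max C 0 with hK
  have hK0 : 0 ≤ K := le_max_right _ _
  obtain ⟨n, hn⟩ := pow_unbounded_of_one_lt (4 * K ^ 2) (by norm_num : (1:ℝ) < 2)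
  have hq := dTil_q n
  set m : ℝ := max |dTil n| |dTil (n+1)| with hm
  have hm0 : 0 ≤ m := le_trans (abs_nonneg _) (le_max_left _ _)
  have h1 : |dTil n| ≤ m := le_max_left _ _
  have h2 : |dTil (n+1)| ≤ m := le_max_right _ _
  have hdn : dTil n ^ 2 ≤ m ^ 2 := by
    have := sq_abs (dTil n); nlinarith [abs_nonneg (dTil n)]
  have hdn1 : dTil (n+1) ^ 2 ≤ m ^ 2 := by
    have := sq_abs (dTil (n+1)); nlinarith [abs_nonneg (dTil (n+1))]
  have hcross : dTil (n+1) * dTil n ≤ m ^ 2 := by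
    calc dTil (n+1) * dTil n ≤ |dTil (n+1) * dTil n| := le_abs_self _
      _ = |dTil (n+1)| * |dTil n| := abs_mul _ _
      _ ≤ m * m := mul_le_mul h2 h1 (abs_nonneg _) hm0
      _ = m ^ 2 := (sq m).symm
  have hbig : 4 * K ^ 2 < 4 * m ^ 2 := by
    have h2n : (2:ℝ) ^ n ≤ 2 ^ (n+1) := by
      apply pow_le_pow_right₀ (by norm_num) (Nat.le_succ n)
    nlinarith
  have hKm : K < m := by nlinarith
  rcases le_total |dTil n| |dTil (n+1)| with h | h
  · refine ⟨n+1, ?_⟩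
    have : m = |dTil (n+1)| := max_eq_right h
    calc C ≤ K := le_max_left _ _
      _ < m := hKm
      _ = _ := this
  · refine ⟨n, ?_⟩
    have : m = |dTil n| := max_eq_left h
    calc C ≤ K := le_max_left _ _
      _ < m := hKm
      _ = _ := this
end
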